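/- arXiv:2002.09076 — 5 statements merged into one kernel-verified Lean document; each statement's English description precedes it below -/
import Mathlib

section
/- In a generalized cardinal algebra, infinite sums are commutative: if the sum ∑ₙ aₙ is defined and π is a permutation of ℕ, then ∑ₙ a_{π(n)} is defined and equals ∑ₙ aₙ. -/
/-- A generalized cardinal algebra (Tarski): a set with a partial binary `add`,
a constant `zero`, and a partial `ω`-ary `sum`, satisfying Tarski's axioms.
Partiality is encoded by definedness predicates `addDef` and `sumDef`. -/
structure GCA (α : Type*) where
  zero : α
  addDef : α → α → Prop
  add : α → α → α
  sumDef : (ℕ → α) → Prop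
  sum : (ℕ → α) → α
  addDef_zero_right : ∀ a, addDef a zero
  addDef_zero_left : ∀ a, addDef zero a
  add_zero : ∀ a, add a zero = a
  zero_add : ∀ a, add zero a = a
  sum_tail : ∀ s, sumDef s →
    sumDef (fun n => s (n + 1)) ∧ addDef (s 0) (sum (fun n => s (n + 1))) ∧
      sum s = add (s 0) (sum (fun n => s (n + 1)))
  sum_add : ∀ s t : ℕ → α, (∀ n, addDef (s n) (t n)) →
    sumDef (fun n => add (s n) (t n)) →
      sumDef s ∧ sumDef t ∧ addDef (sum s) (sum t) ∧
        sum (fun n => add (s n) (t n)) = add (sum s) (sum t)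
  refinement : ∀ x y (c : ℕ → α), addDef x y → sumDef c → add x y = sum c →
    ∃ s t : ℕ → α, sumDef s ∧ sumDef t ∧ sum s = x ∧ sum t = y ∧
      ∀ n, addDef (s n) (t n) ∧ add (s n) (t n) = c n
  remainder : ∀ s t : ℕ → α, (∀ n, addDef (t n) (s (n + 1)) ∧ s n = add (t n) (s (n + 1))) →
    ∃ c, ∀ n, sumDef (fun i => t (i + n)) ∧ addDef c (sum (fun i => t (i + n))) ∧
      s n = add c (sum (fun i => t (i + n)))

/-- The order induced by a GCA: `a ≤ b` iff `a + c = b` for some `c`. -/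
def GCA.le {α : Type*} (A : GCA α) (a b : α) : Prop :=
  ∃ c, A.addDef a c ∧ A.add a c = b

namespace GCA

variable {α : Type*} (A : GCA α)

theorem sum_tail' (v w : ℕ → α) (hv : A.sumDef v) (hw : ∀ n, v (n + 1) = w n) :
    A.sumDef w ∧ A.addDef (v 0) (A.sum w) ∧ A.sum v = A.add (v 0) (A.sum w) := by
  have h : (fun n => v (n + 1)) = w := funext hw
  obtain ⟨h1, h2, h3⟩ := A.sum_tail v hv
  rw [h] at h1 h2 h3
  exact ⟨h1, h2, h3⟩

theorem sum_add'' (s t u : ℕ → α) (hst : ∀ n, A.addDef (s n) (t n))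
    (hu : A.sumDef u) (he : ∀ n, A.add (s n) (t n) = u n) :
    A.sumDef s ∧ A.sumDef t ∧ A.addDef (A.sum s) (A.sum t) ∧
      A.sum u = A.add (A.sum s) (A.sum t) := by
  have h : (fun n => A.add (s n) (t n)) = u := funext he
  obtain ⟨h1, h2, h3, h4⟩ := A.sum_add s t hst (by rw [h]; exact hu)
  exact ⟨h1, h2, h3, by rw [← h]; exact h4⟩

theorem zero_lemma {u : ℕ → α} (hu : A.sumDef u) :
    A.sumDef (fun _ => A.zero) ∧ A.sum (fun _ => A.zero) = A.zero := by
  obtain ⟨w, t, hw, -, hw0, -, -⟩ :=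
    A.refinement A.zero (A.sum u) u (A.addDef_zero_left _) hu (A.zero_add _)
  obtain ⟨-, h2, -, h4⟩ := A.sum_add'' w (fun _ => A.zero) w
    (fun n => A.addDef_zero_right _) hw (fun n => A.add_zero _)
  rw [hw0] at h4
  rw [A.zero_add] at h4
  exact ⟨h2, h4.symm⟩

theorem restrict' (u v w : ℕ → α) (hu : A.sumDef u)
    (hvw : ∀ n, (v n = u n ∧ w n = A.zero) ∨ (v n = A.zero ∧ w n = u n)) :
    A.sumDef v ∧ A.sumDef w ∧ A.addDef (A.sum v) (A.sum w) ∧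
      A.addDef (A.sum w) (A.sum v) ∧
      A.sum u = A.add (A.sum v) (A.sum w) ∧ A.sum u = A.add (A.sum w) (A.sum v) := by
  obtain ⟨h1, h2, h3, h4⟩ := A.sum_add'' v w u
    (fun n => by
      rcases hvw n with ⟨a, b⟩ | ⟨a, b⟩ <;> rw [a, b]
      · exact A.addDef_zero_right _
      · exact A.addDef_zero_left _)
    hu
    (fun n => by
      rcases hvw n with ⟨a, b⟩ | ⟨a, b⟩ <;> rw [a, b]
      · exact A.add_zero _
      · exact A.zero_add _)
  obtain ⟨-, -, h3', h4'⟩ := A.sum_add'' w v u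
    (fun n => by
      rcases hvw n with ⟨a, b⟩ | ⟨a, b⟩ <;> rw [a, b]
      · exact A.addDef_zero_left _
      · exact A.addDef_zero_right _)
    hu
    (fun n => by
      rcases hvw n with ⟨a, b⟩ | ⟨a, b⟩ <;> rw [a, b]
      · exact A.zero_add _
      · exact A.add_zero _)
  exact ⟨h1, h2, h3, h3', h4, h4'⟩

theorem single' (k : ℕ) : ∀ u v : ℕ → α, A.sumDef u →
    (∀ n, n = k → v n = u n) → (∀ n, n ≠ k → v n = A.zero) →
    A.sumDef v ∧ A.sum v = u k := by
  induction k with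
  | zero =>
    intro u v hu hveq hv0
    have hz := A.zero_lemma hu
    have hSDv : A.sumDef v :=
      (A.restrict' u v (fun n => if n = 0 then A.zero else u n) hu
        (fun n => by
          by_cases h : n = 0
          · exact Or.inl ⟨hveq n h, if_pos h⟩
          · exact Or.inr ⟨hv0 n h, if_neg h⟩)).1
    obtain ⟨-, -, h3⟩ := A.sum_tail' v (fun _ => A.zero) hSDv
      (fun n => hv0 (n + 1) (Nat.succ_ne_zero n))
    rw [hz.2, A.add_zero, hveq 0 rfl] at h3
    exact ⟨hSDv, h3⟩
  | succ k ih =>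
    intro u v hu hveq hv0
    have hSDv : A.sumDef v :=
      (A.restrict' u v (fun n => if n = k + 1 then A.zero else u n) hu
        (fun n => by
          by_cases h : n = k + 1
          · exact Or.inl ⟨hveq n h, if_pos h⟩
          · exact Or.inr ⟨hv0 n h, if_neg h⟩)).1
    obtain ⟨hSDv', -, h3⟩ := A.sum_tail' v (fun n => v (n + 1)) hSDv (fun n => rfl)
    rw [hv0 0 (Ne.symm (Nat.succ_ne_zero k)), A.zero_add] at h3
    have hu' : A.sumDef (fun n => u (n + 1)) := (A.sum_tail u hu).1
    obtain ⟨-, hih⟩ := ih (fun n => u (n + 1)) (fun n => v (n + 1)) hu'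
      (fun n hn => hveq (n + 1) (by omega)) (fun n hn => hv0 (n + 1) (by omega))
    exact ⟨hSDv, h3.trans hih⟩

theorem perm_key (s t : ℕ → α) (hs : A.sumDef s) (π : Equiv.Perm ℕ)
    (ht : ∀ n, t n = s (π n)) :
    ∃ d, A.sumDef t ∧ A.addDef d (A.sum t) ∧ A.sum s = A.add d (A.sum t) := by
  have hgSD : ∀ n, A.sumDef (fun i => if n ≤ π.symm i then s i else A.zero) := by
    intro n
    exact (A.restrict' s (fun i => if n ≤ π.symm i then s i else A.zero)
      (fun i => if n ≤ π.symm i then A.zero else s i) hs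
      (fun i => by
        by_cases h : n ≤ π.symm i
        · exact Or.inl ⟨if_pos h, if_pos h⟩
        · exact Or.inr ⟨if_neg h, if_neg h⟩)).1
  have step : ∀ n, A.addDef (t n) (A.sum (fun i => if n + 1 ≤ π.symm i then s i else A.zero)) ∧
      A.sum (fun i => if n ≤ π.symm i then s i else A.zero) =
        A.add (t n) (A.sum (fun i => if n + 1 ≤ π.symm i then s i else A.zero)) := by
    intro n
    obtain ⟨hSDδ, -, hDvw, -, hEq, -⟩ :=
      A.restrict' (fun i => if n ≤ π.symm i then s i else A.zero)
        (fun i => if i = π n then s i else A.zero)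
        (fun i => if n + 1 ≤ π.symm i then s i else A.zero)
        (hgSD n)
        (fun i => by
          beta_reduce
          by_cases h : i = π n
          · have hsy : π.symm i = n := by rw [h, Equiv.symm_apply_apply]
            refine Or.inl ⟨?_, ?_⟩
            · rw [if_pos h, if_pos (by rw [hsy])]
            · rw [if_neg (by rw [hsy]; omega)]
          · have hne : π.symm i ≠ n := fun hh =>
              h (((π.apply_symm_apply i).symm.trans (congrArg π hh)))
            refine Or.inr ⟨if_neg h, ?_⟩
            by_cases h2 : n + 1 ≤ π.symm i
            · rw [if_pos h2, if_pos (by omega)]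
            · rw [if_neg h2, if_neg (by omega)])
    obtain ⟨-, hsing⟩ := A.single' (π n) s (fun i => if i = π n then s i else A.zero) hs
      (fun i hi => if_pos hi) (fun i hi => if_neg hi)
    rw [hsing, ← ht n] at hDvw hEq
    exact ⟨hDvw, hEq⟩
  obtain ⟨d, hd⟩ := A.remainder
    (fun n => A.sum (fun i => if n ≤ π.symm i then s i else A.zero)) t
    (fun n => step n)
  have hSDt : A.sumDef t := (hd 0).1
  have hDd : A.addDef d (A.sum t) := (hd 0).2.1
  have hkey : A.sum (fun i => if 0 ≤ π.symm i then s i else A.zero) =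
      A.add d (A.sum t) := (hd 0).2.2
  have hfull : (fun i => if 0 ≤ π.symm i then s i else A.zero) = s :=
    funext fun i => if_pos (Nat.zero_le _)
  rw [hfull] at hkey
  exact ⟨d, hSDt, hDd, hkey⟩

theorem antisym (a b d d' : α) (hab : A.addDef d b) (ha : a = A.add d b)
    (hba : A.addDef d' a) (hb : b = A.add d' a) : a = b := by
  obtain ⟨e, he⟩ := A.remainder (fun n => if n % 2 = 0 then a else b)
    (fun n => if n % 2 = 0 then d else d')
    (fun n => by
      beta_reduce
      by_cases h : n % 2 = 0
      · have h1 : ¬ (n + 1) % 2 = 0 := by omega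
        rw [if_pos h, if_pos h, if_neg h1]
        exact ⟨hab, ha⟩
      · have h1 : (n + 1) % 2 = 0 := by omega
        rw [if_neg h, if_neg h, if_pos h1]
        exact ⟨hba, hb⟩)
  have hSD0 : A.sumDef (fun i => if i % 2 = 0 then d else d') := (he 0).1
  have hSD1 : A.sumDef (fun i => if (i + 1) % 2 = 0 then d else d') := (he 1).1
  have ha' : a = A.add e (A.sum (fun i => if i % 2 = 0 then d else d')) := (he 0).2.2
  have hb' : b = A.add e (A.sum (fun i => if (i + 1) % 2 = 0 then d else d')) := (he 1).2.2
  -- split T0 into even part v0 and odd part w0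
  obtain ⟨hv0, hw0, -, -, -, hEq0⟩ :=
    A.restrict' (fun i => if i % 2 = 0 then d else d')
      (fun i => if i % 2 = 0 then d else A.zero)
      (fun i => if i % 2 = 0 then A.zero else d')
      hSD0
      (fun i => by
        beta_reduce
        by_cases h : i % 2 = 0
        · exact Or.inl ⟨by rw [if_pos h, if_pos h], if_pos h⟩
        · exact Or.inr ⟨if_neg h, by rw [if_neg h, if_neg h]⟩)
  obtain ⟨hv1, hw1, -, -, hEq1, -⟩ :=
    A.restrict' (fun i => if (i + 1) % 2 = 0 then d else d')
      (fun i => if i % 2 = 0 then d' else A.zero)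
      (fun i => if i % 2 = 0 then A.zero else d)
      hSD1
      (fun i => by
        beta_reduce
        by_cases h : i % 2 = 0
        · have h1 : ¬ (i + 1) % 2 = 0 := by omega
          exact Or.inl ⟨by rw [if_pos h, if_neg h1], if_pos h⟩
        · have h1 : (i + 1) % 2 = 0 := by omega
          exact Or.inr ⟨if_neg h, by rw [if_neg h, if_pos h1]⟩)
  -- shift: sum w0 = sum v1
  obtain ⟨-, -, hs1⟩ := A.sum_tail' (fun i => if i % 2 = 0 then A.zero else d')
    (fun i => if i % 2 = 0 then d' else A.zero) hw0
    (fun n => by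
      beta_reduce
      by_cases h : n % 2 = 0
      · have h1 : ¬ (n + 1) % 2 = 0 := by omega
        rw [if_neg h1, if_pos h]
      · have h1 : (n + 1) % 2 = 0 := by omega
        rw [if_pos h1, if_neg h])
  have hshift1 : A.sum (fun i => if i % 2 = 0 then A.zero else d') =
      A.sum (fun i => if i % 2 = 0 then d' else A.zero) := by
    have h0 : (if 0 % 2 = 0 then A.zero else d') = A.zero := if_pos rfl
    rw [h0] at hs1
    rw [hs1, A.zero_add]
  obtain ⟨-, -, hs2⟩ := A.sum_tail' (fun i => if i % 2 = 0 then A.zero else d)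
    (fun i => if i % 2 = 0 then d else A.zero) hw1
    (fun n => by
      beta_reduce
      by_cases h : n % 2 = 0
      · have h1 : ¬ (n + 1) % 2 = 0 := by omega
        rw [if_neg h1, if_pos h]
      · have h1 : (n + 1) % 2 = 0 := by omega
        rw [if_pos h1, if_neg h])
  have hshift2 : A.sum (fun i => if i % 2 = 0 then A.zero else d) =
      A.sum (fun i => if i % 2 = 0 then d else A.zero) := by
    have h0 : (if 0 % 2 = 0 then A.zero else d) = A.zero := if_pos rfl
    rw [h0] at hs2
    rw [hs2, A.zero_add]
  -- conclude sum T0 = sum T1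
  rw [hshift1, ← hshift2] at hEq0
  rw [ha', hb', hEq0, hEq1]

end GCA

/-- In a generalized cardinal algebra, infinite sums are commutative: if `∑ₙ sₙ`
is defined and `π` is a permutation of `ℕ`, then `∑ₙ s (π n)` is defined and
equals `∑ₙ sₙ`. -/
theorem GCA.sum_comm {α : Type*} (A : GCA α) (s : ℕ → α) (hs : A.sumDef s)
    (π : Equiv.Perm ℕ) :
    A.sumDef (fun n => s (π n)) ∧ A.sum (fun n => s (π n)) = A.sum s := by
  obtain ⟨d, hSDt, hD, hEq⟩ := A.perm_key s (fun n => s (π n)) hs π (fun n => rfl)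
  obtain ⟨d', hSDs', hD', hEq'⟩ := A.perm_key (fun n => s (π n)) s hSDt π.symm
    (fun n => (congrArg s (π.apply_symm_apply n)).symm)
  exact ⟨hSDt, (A.antisym (A.sum s) (A.sum (fun n => s (π n))) d d' hD hEq hD' hEq').symm⟩
end

section
/- For an element a of a generalized cardinal algebra, the following are equivalent: (1) for all b, c, a + b = a + c implies b = c; (2) for all b, a + b = a implies b = 0; (3) for all b, c, a + b ≤ a + c implies b ≤ c, where x ≤ y means there exists d with x + d = y. -/
namespace GCA

variable {α : Type*} (A : GCA α)

theorem sum_zero : A.sumDef (fun _ => A.zero) ∧ A.sum (fun _ => A.zero) = A.zero := by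
  obtain ⟨c₁, hc₁⟩ := A.remainder (fun _ => A.zero) (fun _ => A.zero)
    (fun n => ⟨A.addDef_zero_left A.zero, (A.zero_add A.zero).symm⟩)
  have hsd : A.sumDef (fun _ => A.zero) := (hc₁ 0).1
  refine ⟨hsd, ?_⟩
  -- w + w = w
  obtain ⟨-, -, hWWd, hWWe⟩ := A.sum_add (fun _ => A.zero) (fun _ => A.zero)
    (fun _ => A.addDef_zero_left A.zero)
    (by
      have h : (fun _ : ℕ => A.add A.zero A.zero) = fun _ : ℕ => A.zero :=
        funext fun _ => A.add_zero A.zero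
      rw [h]; exact hsd)
  have hWW : A.sum (fun _ : ℕ => A.zero)
      = A.add (A.sum fun _ => A.zero) (A.sum fun _ => A.zero) :=
    (congrArg A.sum (funext fun _ : ℕ => (A.add_zero A.zero).symm)).trans hWWe
  -- remainder on the sequence (w, 0, 0, ...)
  obtain ⟨c₂, hc₂⟩ := A.remainder
    (fun n => if n = 0 then A.sum (fun _ : ℕ => A.zero) else A.zero)
    (fun n => if n = 0 then A.sum (fun _ : ℕ => A.zero) else A.zero)
    (by
      intro n
      rcases n with _ | n
      · exact ⟨A.addDef_zero_right _, (A.add_zero _).symm⟩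
      · exact ⟨A.addDef_zero_right _, (A.add_zero _).symm⟩)
  have htail : (fun n : ℕ => if n + 1 = 0 then (A.sum fun _ : ℕ => A.zero) else A.zero)
      = fun _ : ℕ => A.zero := funext fun n => by simp
  have hst2 : (A.sum fun n => if n = 0 then (A.sum fun _ : ℕ => A.zero) else A.zero)
      = A.add (A.sum fun _ : ℕ => A.zero)
          (A.sum fun n : ℕ => if n + 1 = 0 then (A.sum fun _ : ℕ => A.zero) else A.zero) :=
    (A.sum_tail (fun n => if n = 0 then A.sum (fun _ : ℕ => A.zero) else A.zero) (hc₂ 0).1).2.2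
  rw [htail] at hst2
  have hδw : (A.sum fun n => if n = 0 then (A.sum fun _ : ℕ => A.zero) else A.zero)
      = A.sum (fun _ : ℕ => A.zero) := hst2.trans hWW.symm
  have h1 : A.zero = A.add c₂ (A.sum fun _ : ℕ => A.zero) := by
    have h := (hc₂ 1).2.2
    rw [htail] at h
    exact h
  have h0 : (A.sum fun _ : ℕ => A.zero)
      = A.add c₂ (A.sum fun n => if n = 0 then (A.sum fun _ : ℕ => A.zero) else A.zero) :=
    (hc₂ 0).2.2
  rw [hδw] at h0
  exact h0.trans h1.symm
theorem sum_single (x : α) : A.sumDef (fun n => if n = 0 then x else A.zero) ∧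
    A.sum (fun n => if n = 0 then x else A.zero) = x := by
  obtain ⟨c, hc⟩ := A.remainder
    (fun n => if n = 0 then x else A.zero) (fun n => if n = 0 then x else A.zero)
    (by
      intro n
      rcases n with _ | n
      · exact ⟨A.addDef_zero_right _, (A.add_zero _).symm⟩
      · exact ⟨A.addDef_zero_right _, (A.add_zero _).symm⟩)
  have htail : (fun n : ℕ => if n + 1 = 0 then x else A.zero) = fun _ : ℕ => A.zero :=
    funext fun n => by simp
  have h1 : A.zero = A.add c (A.sum fun _ : ℕ => A.zero) := by
    have h := (hc 1).2.2
    rw [htail] at h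
    exact h
  rw [(A.sum_zero).2, A.add_zero] at h1
  have h0 : x = A.add c (A.sum fun n => if n = 0 then x else A.zero) := (hc 0).2.2
  rw [← h1, A.zero_add] at h0
  exact ⟨(hc 0).1, h0.symm⟩

theorem comm {x y : α} (h : A.addDef x y) : A.addDef y x ∧ A.add x y = A.add y x := by
  obtain ⟨c, hc⟩ := A.remainder
    (fun n => if n = 0 then A.add x y else y) (fun n => if n = 0 then x else A.zero)
    (by
      intro n
      rcases n with _ | n
      · exact ⟨h, rfl⟩
      · exact ⟨A.addDef_zero_left _, (A.zero_add _).symm⟩)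
  have htail : (fun n : ℕ => if n + 1 = 0 then x else A.zero) = fun _ : ℕ => A.zero :=
    funext fun n => by simp
  have h1 : y = A.add c (A.sum fun _ : ℕ => A.zero) := by
    have h := (hc 1).2.2
    rw [htail] at h
    exact h
  rw [(A.sum_zero).2, A.add_zero] at h1
  have h0 : A.add x y = A.add c (A.sum fun n => if n = 0 then x else A.zero) := (hc 0).2.2
  have h0d : A.addDef c (A.sum fun n => if n = 0 then x else A.zero) := (hc 0).2.1
  rw [(A.sum_single x).2] at h0 h0d
  rw [← h1] at h0 h0d
  exact ⟨h0d, h0⟩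

theorem pair2 {x y : α} (h : A.addDef x y) :
    A.sumDef (fun n => if n = 0 then x else if n = 1 then y else A.zero) ∧
    A.sum (fun n => if n = 0 then x else if n = 1 then y else A.zero) = A.add x y := by
  obtain ⟨c, hc⟩ := A.remainder
    (fun n => if n = 0 then A.add x y else if n = 1 then y else A.zero)
    (fun n => if n = 0 then x else if n = 1 then y else A.zero)
    (by
      intro n
      rcases n with _ | _ | n
      · exact ⟨h, rfl⟩
      · exact ⟨A.addDef_zero_right _, (A.add_zero _).symm⟩
      · exact ⟨A.addDef_zero_left _, (A.zero_add _).symm⟩)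
  have htail : (fun n : ℕ => if n + 2 = 0 then x else if n + 2 = 1 then y else A.zero)
      = fun _ : ℕ => A.zero := funext fun n => by simp
  have h2 : A.zero = A.add c (A.sum fun _ : ℕ => A.zero) := by
    have h := (hc 2).2.2
    rw [htail] at h
    exact h
  rw [(A.sum_zero).2, A.add_zero] at h2
  have h0 : A.add x y
      = A.add c (A.sum fun n => if n = 0 then x else if n = 1 then y else A.zero) := (hc 0).2.2
  rw [← h2, A.zero_add] at h0
  exact ⟨(hc 0).1, h0.symm⟩
theorem assoc {p q r : α} (hpq : A.addDef p q) (hr : A.addDef (A.add p q) r) :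
    A.addDef q r ∧ A.addDef p (A.add q r) ∧
      A.add (A.add p q) r = A.add p (A.add q r) := by
  obtain ⟨hrpq, hcomm1⟩ := A.comm hr
  obtain ⟨hqp, hcomm2⟩ := A.comm hpq
  obtain ⟨c, hc⟩ := A.remainder
    (fun n => if n = 0 then A.add (A.add p q) r else if n = 1 then A.add p q
      else if n = 2 then p else A.zero)
    (fun n => if n = 0 then r else if n = 1 then q else if n = 2 then p else A.zero)
    (by
      intro n
      rcases n with _ | _ | _ | n
      · exact ⟨hrpq, hcomm1⟩
      · exact ⟨hqp, hcomm2⟩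
      · exact ⟨A.addDef_zero_right _, (A.add_zero _).symm⟩
      · exact ⟨A.addDef_zero_left _, (A.zero_add _).symm⟩)
  have htail3 : (fun n : ℕ => if n + 3 = 0 then r else if n + 3 = 1 then q
      else if n + 3 = 2 then p else A.zero) = fun _ : ℕ => A.zero := funext fun n => by simp
  have h3 : A.zero = A.add c (A.sum fun _ : ℕ => A.zero) := by
    have h := (hc 3).2.2
    rw [htail3] at h
    exact h
  rw [(A.sum_zero).2, A.add_zero] at h3
  have hT : A.sumDef (fun n => if n = 0 then r else if n = 1 then q
      else if n = 2 then p else A.zero) := (hc 0).1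
  have h0 : A.add (A.add p q) r = A.add c (A.sum fun n => if n = 0 then r else if n = 1 then q
      else if n = 2 then p else A.zero) := (hc 0).2.2
  rw [← h3, A.zero_add] at h0
  -- split T pointwise as (r,q,0,...) + (0,0,p,0,...)
  have hpt : ∀ n : ℕ, A.addDef (if n = 0 then r else if n = 1 then q else A.zero)
      (if n = 0 then A.zero else if n = 1 then A.zero else if n = 2 then p else A.zero) := by
    intro n
    rcases n with _ | _ | _ | n
    · exact A.addDef_zero_right r
    · exact A.addDef_zero_right q
    · exact A.addDef_zero_left p
    · exact A.addDef_zero_left A.zero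
  have hfun : (fun n => A.add (if n = 0 then r else if n = 1 then q else A.zero)
      (if n = 0 then A.zero else if n = 1 then A.zero else if n = 2 then p else A.zero))
      = (fun n => if n = 0 then r else if n = 1 then q else if n = 2 then p else A.zero) := by
    funext n
    rcases n with _ | _ | _ | n <;> simp [A.add_zero, A.zero_add]
  obtain ⟨hsd1, hsd2, hd12, he12⟩ := A.sum_add
    (fun n => if n = 0 then r else if n = 1 then q else A.zero)
    (fun n => if n = 0 then A.zero else if n = 1 then A.zero else if n = 2 then p else A.zero)
    hpt (by rw [hfun]; exact hT)
  rw [hfun] at he12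
  -- sum of (r,q,0,...) is add r q
  have htail1 : (fun n : ℕ => if n + 1 = 0 then r else if n + 1 = 1 then q else A.zero)
      = fun n : ℕ => if n = 0 then q else A.zero := by
    funext n; rcases n with _ | n <;> simp
  have hst1 := A.sum_tail (fun n => if n = 0 then r else if n = 1 then q else A.zero) hsd1
  have hs1 : A.sum (fun n => if n = 0 then r else if n = 1 then q else A.zero)
      = A.add r (A.sum fun n : ℕ => if n + 1 = 0 then r else if n + 1 = 1 then q else A.zero) :=
    hst1.2.2
  have hd1 : A.addDef r (A.sum fun n : ℕ => if n + 1 = 0 then r else if n + 1 = 1 then q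
      else A.zero) := hst1.2.1
  rw [htail1, (A.sum_single q).2] at hs1 hd1
  -- sum of (0,0,p,0,...) is p
  have htail2 : (fun n : ℕ => if n + 1 = 0 then A.zero else if n + 1 = 1 then A.zero
      else if n + 1 = 2 then p else A.zero) = fun n : ℕ => if n = 0 then A.zero
      else if n = 1 then p else A.zero := by
    funext n; rcases n with _ | _ | n <;> simp
  have hst2 := A.sum_tail (fun n => if n = 0 then A.zero else if n = 1 then A.zero
      else if n = 2 then p else A.zero) hsd2
  have hs2 : A.sum (fun n => if n = 0 then A.zero else if n = 1 then A.zero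
      else if n = 2 then p else A.zero)
      = A.add A.zero (A.sum fun n : ℕ => if n + 1 = 0 then A.zero else if n + 1 = 1 then A.zero
        else if n + 1 = 2 then p else A.zero) := hst2.2.2
  have hsd2' := hst2.1
  rw [htail2] at hs2
  have hsd2'' : A.sumDef (fun n : ℕ => if n = 0 then A.zero else if n = 1 then p else A.zero) := by
    rw [htail2] at hsd2'
    exact hsd2'
  have htail2b : (fun n : ℕ => if n + 1 = 0 then A.zero else if n + 1 = 1 then p else A.zero)
      = fun n : ℕ => if n = 0 then p else A.zero := by
    funext n; rcases n with _ | n <;> simp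
  have hst2b := A.sum_tail (fun n => if n = 0 then A.zero else if n = 1 then p else A.zero) hsd2''
  have hs2b : A.sum (fun n : ℕ => if n = 0 then A.zero else if n = 1 then p else A.zero)
      = A.add A.zero (A.sum fun n : ℕ => if n + 1 = 0 then A.zero
        else if n + 1 = 1 then p else A.zero) := hst2b.2.2
  rw [htail2b, (A.sum_single p).2, A.zero_add] at hs2b
  rw [hs2b, A.zero_add] at hs2
  rw [hs1, hs2] at he12 hd12
  -- now: add (add p q) r = sum T = add (add r q) p
  have hkey : A.add (A.add p q) r = A.add (A.add r q) p := h0.trans he12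
  obtain ⟨hdp_rq, hc3⟩ := A.comm hd12
  obtain ⟨hqr, hc4⟩ := A.comm hd1
  rw [hc4] at hdp_rq hc3
  exact ⟨hqr, hdp_rq, by rw [hkey, hc4, hc3]⟩
theorem assoc' {p q r : α} (hqr : A.addDef q r) (hp : A.addDef p (A.add q r)) :
    A.addDef p q ∧ A.addDef (A.add p q) r ∧
      A.add p (A.add q r) = A.add (A.add p q) r := by
  obtain ⟨hrq, hc1⟩ := A.comm hqr
  obtain ⟨hqrp, hc2⟩ := A.comm hp
  rw [hc1] at hqrp hc2
  obtain ⟨hqp, hrqp, hc3⟩ := A.assoc hrq hqrp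
  obtain ⟨hpq, hc4⟩ := A.comm hqp
  rw [hc4] at hrqp hc3
  obtain ⟨hpqr, hc5⟩ := A.comm hrqp
  exact ⟨hpq, hpqr, by rw [hc1, hc2, hc3, hc5]⟩

theorem left_comm {x y z : α} (hyz : A.addDef y z) (hx : A.addDef x (A.add y z)) :
    A.addDef x z ∧ A.addDef y (A.add x z) ∧
      A.add x (A.add y z) = A.add y (A.add x z) := by
  obtain ⟨hxy, hxyz, hc1⟩ := A.assoc' hyz hx
  obtain ⟨hyx, hc2⟩ := A.comm hxy
  rw [hc2] at hxyz hc1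
  obtain ⟨hxz, hyxz, hc3⟩ := A.assoc hyx hxyz
  exact ⟨hxz, hyxz, by rw [hc1, hc3]⟩

theorem antisym_s1 {x y : α} (h1 : A.le x y) (h2 : A.le y x) : x = y := by
  obtain ⟨p, hp, hpe⟩ := h1
  obtain ⟨q, hq, hqe⟩ := h2
  rw [← hpe] at hq hqe
  obtain ⟨hpq, hxpq, hass⟩ := A.assoc hp hq
  -- x = x + (p + q)
  have hxu : x = A.add x (A.add p q) := by rw [← hass, hqe]
  obtain ⟨hux, hcu⟩ := A.comm hxpq
  obtain ⟨c, hc⟩ := A.remainder (fun _ => x) (fun _ => A.add p q)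
    (fun n => ⟨hux, by rw [← hcu, ← hxu]⟩)
  -- U = Σ (p+q) ; show U = (p+q's) absorbs p
  have hsdU : A.sumDef (fun _ : ℕ => A.add p q) := (hc 0).1
  obtain ⟨hsdp, hsdq, hXY, hU⟩ := A.sum_add (fun _ => p) (fun _ => q) (fun _ => hpq) hsdU
  have hstp := A.sum_tail (fun _ : ℕ => p) hsdp
  have hX : A.sum (fun _ : ℕ => p) = A.add p (A.sum fun _ : ℕ => p) := hstp.2.2
  have hXd : A.addDef p (A.sum fun _ : ℕ => p) := hstp.2.1
  obtain ⟨hXYd, hpXY, hass2⟩ := A.assoc hXd (by rw [← hX]; exact hXY)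
  -- hass2 : add (add p X) Y = add p (add X Y)
  have hUp : A.sum (fun _ : ℕ => A.add p q) = A.add p (A.sum (fun _ : ℕ => A.add p q)) := by
    rw [hU, ← hass2, ← hX]
  have hpU : A.addDef p (A.sum (fun _ : ℕ => A.add p q)) := by
    rw [hU]; exact hpXY
  -- y = x
  have hx0 : x = A.add c (A.sum (fun _ : ℕ => A.add p q)) := (hc 0).2.2
  have hcd : A.addDef c (A.sum (fun _ : ℕ => A.add p q)) := (hc 0).2.1
  obtain ⟨hUpd, hcUp, hass3⟩ := A.assoc hcd (by rw [← hx0]; exact hp)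
  obtain ⟨-, hcom3⟩ := A.comm hUpd
  rw [← hpe, hx0, hass3, hcom3, ← hUp, ← hx0]

theorem zero_min {u v : α} (h : A.addDef u v) (he : A.add u v = A.zero) :
    u = A.zero ∧ v = A.zero := by
  have hu : u = A.zero := A.antisym_s1 ⟨v, h, he⟩ ⟨u, A.addDef_zero_left u, A.zero_add u⟩
  refine ⟨hu, ?_⟩
  rw [hu, A.zero_add] at he
  exact he
theorem step {x y v : α} (hxy : A.addDef x y) (hxv : A.addDef x v)
    (he : A.add x y = A.add x v) :
    ∃ x' y' v' d, A.addDef x' y' ∧ A.add x' y' = x ∧ A.addDef x' v' ∧ A.add x' v' = x ∧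
      A.addDef y' d ∧ A.add y' d = y ∧ A.addDef v' d ∧ A.add v' d = v := by
  obtain ⟨hsdc, hsc⟩ := A.pair2 hxv
  obtain ⟨s, t, hsds, hsdt, hss, hst, hspec⟩ :=
    A.refinement x y _ hxy hsdc (by rw [he, hsc])
  have hz : ∀ n, s (n+2) = A.zero ∧ t (n+2) = A.zero := by
    intro n
    have h := hspec (n+2)
    have h2 : A.add (s (n+2)) (t (n+2)) = A.zero := by simpa using h.2
    exact A.zero_min h.1 h2
  -- x = s 0 + s 1
  have hts : (fun n => s (n+1+1)) = fun _ : ℕ => A.zero := funext fun n => (hz n).1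
  have hst1 := A.sum_tail s hsds
  have hst2 := A.sum_tail (fun n => s (n+1)) hst1.1
  have e2 : A.sum (fun n => s (n+1)) = A.add (s 1) (A.sum fun n => s (n+1+1)) := hst2.2.2
  rw [hts, (A.sum_zero).2, A.add_zero] at e2
  have hxeq : x = A.add (s 0) (s 1) := by
    have e1 : A.sum s = A.add (s 0) (A.sum fun n => s (n+1)) := hst1.2.2
    rw [← hss, e1, e2]
  have hxd : A.addDef (s 0) (s 1) := by
    have h := hst1.2.1
    rwa [e2] at h
  -- y = t 0 + t 1
  have htt : (fun n => t (n+1+1)) = fun _ : ℕ => A.zero := funext fun n => (hz n).2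
  have hst1t := A.sum_tail t hsdt
  have hst2t := A.sum_tail (fun n => t (n+1)) hst1t.1
  have f2 : A.sum (fun n => t (n+1)) = A.add (t 1) (A.sum fun n => t (n+1+1)) := hst2t.2.2
  rw [htt, (A.sum_zero).2, A.add_zero] at f2
  have hyeq : y = A.add (t 0) (t 1) := by
    have f1 : A.sum t = A.add (t 0) (A.sum fun n => t (n+1)) := hst1t.2.2
    rw [← hst, f1, f2]
  have hyd : A.addDef (t 0) (t 1) := by
    have h := hst1t.2.1
    rwa [f2] at h
  refine ⟨s 0, t 0, s 1, t 1, (hspec 0).1, by simpa using (hspec 0).2, hxd, hxeq.symm,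
    hyd, hyeq.symm, (hspec 1).1, by simpa using (hspec 1).2⟩
theorem absorb {as bs aa : α} (W D : ℕ → α)
    (hW : ∀ n, A.addDef bs (A.sum fun i => D (i + n)) ∧
      W n = A.add bs (A.sum fun i => D (i + n)))
    (hsdW : A.sumDef (fun i => W (i+1)))
    (haD : A.addDef as (A.sum fun i => W (i+1)))
    (ha : aa = A.add as (A.sum fun i => W (i+1))) :
    A.addDef aa bs ∧ A.add aa bs = aa := by
  have hfun : (fun i => W (i+1)) = fun i => A.add bs (A.sum fun j => D (j + (i+1))) :=
    funext fun i => (hW (i+1)).2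
  obtain ⟨hsdb, hsdD, hBE, hsum⟩ := A.sum_add (fun _ => bs)
    (fun i => A.sum fun j => D (j + (i+1)))
    (fun i => (hW (i+1)).1) (by rw [← hfun]; exact hsdW)
  have hB1 : A.sum (fun i => W (i+1))
      = A.add (A.sum fun _ : ℕ => bs) (A.sum fun i => A.sum fun j => D (j + (i+1))) := by
    rw [hfun]; exact hsum
  have hstb := A.sum_tail (fun _ : ℕ => bs) hsdb
  have hBs : A.sum (fun _ : ℕ => bs) = A.add bs (A.sum fun _ : ℕ => bs) := hstb.2.2
  have hBsd : A.addDef bs (A.sum fun _ : ℕ => bs) := hstb.2.1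
  obtain ⟨hBE', hb_BE, hass⟩ := A.assoc hBsd (by rw [← hBs]; exact hBE)
  have hB1b : A.sum (fun i => W (i+1)) = A.add bs (A.sum (fun i => W (i+1))) := by
    rw [hB1, ← hass, ← hBs]
  have hbB1 : A.addDef bs (A.sum (fun i => W (i+1))) := by
    rw [hB1]; exact hb_BE
  have ha2 : aa = A.add as (A.add bs (A.sum fun i => W (i+1))) := by
    rw [← hB1b]; exact ha
  have haD2 : A.addDef as (A.add bs (A.sum fun i => W (i+1))) := by
    rw [← hB1b]; exact haD
  obtain ⟨hasz, hbsaz, hlc⟩ := A.left_comm hbB1 haD2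
  have ha3 : aa = A.add bs aa :=
    ha2.trans (hlc.trans (congrArg (A.add bs) ha.symm))
  rw [← ha] at hbsaz
  obtain ⟨habs', hcf⟩ := A.comm hbsaz
  exact ⟨habs', by rw [← hcf, ← ha3]⟩

theorem tarski22 {a b c : α} (hab : A.addDef a b) (hac : A.addDef a c)
    (h : A.add a b = A.add a c) :
    ∃ d b' c', A.addDef b' d ∧ A.add b' d = b ∧ A.addDef c' d ∧ A.add c' d = c ∧
      A.addDef a b' ∧ A.add a b' = a ∧ A.addDef a c' ∧ A.add a c' = a := by
  classical
  let T := {p : α × α × α //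
    A.addDef p.1 p.2.1 ∧ A.addDef p.1 p.2.2 ∧ A.add p.1 p.2.1 = A.add p.1 p.2.2}
  have hstep : ∀ t : T, ∃ s : T × α,
      A.add s.1.1.1 s.1.1.2.1 = t.1.1 ∧ A.add s.1.1.1 s.1.1.2.2 = t.1.1 ∧
      A.addDef s.1.1.2.1 s.2 ∧ A.add s.1.1.2.1 s.2 = t.1.2.1 ∧
      A.addDef s.1.1.2.2 s.2 ∧ A.add s.1.1.2.2 s.2 = t.1.2.2 := by
    rintro ⟨⟨x, y, v⟩, hxy, hxv, hyv⟩
    obtain ⟨x', y', v', d, h1, h2, h3, h4, h5, h6, h7, h8⟩ := A.step hxy hxv hyv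
    exact ⟨⟨⟨⟨x', y', v'⟩, h1, h3, h2.trans h4.symm⟩, d⟩, h2, h4, h5, h6, h7, h8⟩
  choose f hf1 hf2 hf3 hf4 hf5 hf6 using hstep
  let F : ℕ → T := fun n => Nat.rec ⟨⟨a, b, c⟩, hab, hac, h⟩ (fun _ t => (f t).1) n
  let X : ℕ → α := fun n => (F n).1.1
  let Y : ℕ → α := fun n => (F n).1.2.1
  let V : ℕ → α := fun n => (F n).1.2.2
  let D : ℕ → α := fun n => (f (F n)).2
  have hXY : ∀ n, A.add (X (n+1)) (Y (n+1)) = X n := fun n => hf1 (F n)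
  have hXV : ∀ n, A.add (X (n+1)) (V (n+1)) = X n := fun n => hf2 (F n)
  have hYD : ∀ n, A.addDef (Y (n+1)) (D n) := fun n => hf3 (F n)
  have hYDe : ∀ n, A.add (Y (n+1)) (D n) = Y n := fun n => hf4 (F n)
  have hVD : ∀ n, A.addDef (V (n+1)) (D n) := fun n => hf5 (F n)
  have hVDe : ∀ n, A.add (V (n+1)) (D n) = V n := fun n => hf6 (F n)
  -- remainder chains
  have hYchain : ∀ n, A.addDef (D n) (Y (n+1)) ∧ Y n = A.add (D n) (Y (n+1)) := by
    intro n
    obtain ⟨hd, hce⟩ := A.comm (hYD n)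
    exact ⟨hd, (hYDe n).symm.trans hce⟩
  obtain ⟨bs, hbs⟩ := A.remainder Y D hYchain
  have hVchain : ∀ n, A.addDef (D n) (V (n+1)) ∧ V n = A.add (D n) (V (n+1)) := by
    intro n
    obtain ⟨hd, hce⟩ := A.comm (hVD n)
    exact ⟨hd, (hVDe n).symm.trans hce⟩
  obtain ⟨cs, hcs⟩ := A.remainder V D hVchain
  have hXchainY : ∀ n, A.addDef (Y (n+1)) (X (n+1)) ∧ X n = A.add (Y (n+1)) (X (n+1)) := by
    intro n
    obtain ⟨hd, hce⟩ := A.comm ((F (n+1)).2.1)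
    exact ⟨hd, (hXY n).symm.trans hce⟩
  obtain ⟨as1, has1⟩ := A.remainder X (fun n => Y (n+1)) hXchainY
  have hXchainV : ∀ n, A.addDef (V (n+1)) (X (n+1)) ∧ X n = A.add (V (n+1)) (X (n+1)) := by
    intro n
    obtain ⟨hd, hce⟩ := A.comm ((F (n+1)).2.2.1)
    exact ⟨hd, (hXV n).symm.trans hce⟩
  obtain ⟨as2, has2⟩ := A.remainder X (fun n => V (n+1)) hXchainV
  -- absorption: a + bs = a and a + cs = a
  obtain ⟨habsd, habse⟩ := A.absorb (as := as1) (bs := bs) (aa := a) Y D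
    (fun n => ⟨(hbs n).2.1, (hbs n).2.2⟩) (has1 0).1 (has1 0).2.1 (has1 0).2.2
  obtain ⟨hacsd, hacse⟩ := A.absorb (as := as2) (bs := cs) (aa := a) V D
    (fun n => ⟨(hcs n).2.1, (hcs n).2.2⟩) (has2 0).1 (has2 0).2.1 (has2 0).2.2
  exact ⟨A.sum (fun i => D (i + 0)), bs, cs, (hbs 0).2.1, ((hbs 0).2.2).symm,
    (hcs 0).2.1, ((hcs 0).2.2).symm, habsd, habse, hacsd, hacse⟩
end GCA

/-- For an element `a` of a GCA, the following are equivalent: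
(1) `a + b = a + c` implies `b = c`;
(2) `a + b = a` implies `b = 0`;
(3) `a + b ≤ a + c` implies `b ≤ c`. -/
theorem GCA.cancellative_tfae {α : Type*} (A : GCA α) (a : α) :
    ((∀ b c, A.addDef a b → A.addDef a c → A.add a b = A.add a c → b = c) ↔
      (∀ b, A.addDef a b → A.add a b = a → b = A.zero)) ∧
    ((∀ b, A.addDef a b → A.add a b = a → b = A.zero) ↔
      (∀ b c, A.addDef a b → A.addDef a c →
        A.le (A.add a b) (A.add a c) → A.le b c)) := by
  constructor
  · constructor
    · intro h1 b hb hba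
      exact h1 b A.zero hb (A.addDef_zero_right a) (by rw [A.add_zero, hba])
    · intro h2 b c hb hc heq
      obtain ⟨d, b', c', hb'd, hb'de, hc'd, hc'de, hab', hab'e, hac', hac'e⟩ :=
        A.tarski22 hb hc heq
      have hb0 : b' = A.zero := h2 b' hab' hab'e
      have hc0 : c' = A.zero := h2 c' hac' hac'e
      rw [hb0, A.zero_add] at hb'de
      rw [hc0, A.zero_add] at hc'de
      rw [← hb'de, ← hc'de]
  · constructor
    · intro h2 b c hb hc hle
      obtain ⟨e, he, hee⟩ := hle
      obtain ⟨hbe, habe, hass⟩ := A.assoc hb he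
      have heq : A.add a (A.add b e) = A.add a c := by rw [← hass, hee]
      obtain ⟨d, b', c', hb'd, hb'de, hc'd, hc'de, hab', hab'e, hac', hac'e⟩ :=
        A.tarski22 habe hc heq
      have hb0 : b' = A.zero := h2 b' hab' hab'e
      have hc0 : c' = A.zero := h2 c' hac' hac'e
      rw [hb0, A.zero_add] at hb'de
      rw [hc0, A.zero_add] at hc'de
      exact ⟨e, hbe, hb'de.symm.trans hc'de⟩
    · intro h3 b hb hba
      have hle : A.le (A.add a b) (A.add a A.zero) :=
        ⟨A.zero, A.addDef_zero_right _, by rw [A.add_zero, A.add_zero, hba]⟩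
      obtain ⟨e, he, hee⟩ := h3 b A.zero hb (A.addDef_zero_right a) hle
      exact (A.zero_min he hee).1
end

section
/- In a σ-complete Boolean algebra, defining a + b to be a ∨ b when a ∧ b = 0 (undefined otherwise), 0 the bottom element, and ∑ₙ aₙ to be ⋁ₙ aₙ when the aₙ are pairwise disjoint, yields a generalized cardinal algebra; i.e., the refinement and remainder axioms hold for disjoint joins. -/
/-- In a σ-complete Boolean algebra (σ-completeness encoded by a
countable-join operation `csup` with `csup s` a least upper bound of the range
of `s`), defining `a + b = a ⊔ b` when `a ⊓ b = ⊥` (undefined otherwise),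
`0 = ⊥`, and `∑ₙ aₙ = ⋁ₙ aₙ` when the `aₙ` are pairwise disjoint, yields a
generalized cardinal algebra: all of Tarski's axioms hold for disjoint joins,
in particular refinement and remainder. -/
theorem sigmaBooleanAlgebra_GCA {B : Type*} [BooleanAlgebra B]
    (csup : (ℕ → B) → B)
    (hlub : ∀ s : ℕ → B, IsLUB (Set.range s) (csup s)) :
    -- axiom 1
    (∀ s : ℕ → B, (∀ m n, m ≠ n → s m ⊓ s n = ⊥) →
      s 0 ⊓ csup (fun n => s (n + 1)) = ⊥ ∧
        csup s = s 0 ⊔ csup (fun n => s (n + 1))) ∧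
    -- axiom 2
    (∀ s t : ℕ → B, (∀ n, s n ⊓ t n = ⊥) →
      (∀ m n, m ≠ n → (s m ⊔ t m) ⊓ (s n ⊔ t n) = ⊥) →
      (∀ m n, m ≠ n → s m ⊓ s n = ⊥) ∧ (∀ m n, m ≠ n → t m ⊓ t n = ⊥) ∧
        csup s ⊓ csup t = ⊥ ∧ csup (fun n => s n ⊔ t n) = csup s ⊔ csup t) ∧
    -- axiom 3
    (∀ a : B, a ⊓ ⊥ = ⊥ ∧ a ⊔ ⊥ = a) ∧
    -- axiom 4: refinement
    (∀ (x y : B) (c : ℕ → B), x ⊓ y = ⊥ → (∀ m n, m ≠ n → c m ⊓ c n = ⊥) →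
      x ⊔ y = csup c →
      ∃ s t : ℕ → B, (∀ m n, m ≠ n → s m ⊓ s n = ⊥) ∧
        (∀ m n, m ≠ n → t m ⊓ t n = ⊥) ∧ x = csup s ∧ y = csup t ∧
        ∀ n, s n ⊓ t n = ⊥ ∧ c n = s n ⊔ t n) ∧
    -- axiom 5: remainder
    (∀ s t : ℕ → B, (∀ n, t n ⊓ s (n + 1) = ⊥ ∧ s n = t n ⊔ s (n + 1)) →
      ∃ c : B, ∀ n, (∀ i j, i ≠ j → t (i + n) ⊓ t (j + n) = ⊥) ∧
        c ⊓ csup (fun i => t (i + n)) = ⊥ ∧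
        s n = c ⊔ csup (fun i => t (i + n))) := by

  have le_csup : ∀ (s : ℕ → B) (n : ℕ), s n ≤ csup s := fun s n => (hlub s).1 ⟨n, rfl⟩
  have csup_le : ∀ (s : ℕ → B) (x : B), (∀ n, s n ≤ x) → csup s ≤ x := fun s x h =>
    (hlub s).2 (by rintro _ ⟨n, rfl⟩; exact h n)
  have inf_csup_le : ∀ (a : B) (v : ℕ → B) (w : B), (∀ n, a ⊓ v n ≤ w) → a ⊓ csup v ≤ w := by
    intro a v w h
    have h1 : csup v ≤ w ⊔ aᶜ := csup_le _ _ fun n => by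
      calc v n = v n ⊓ (a ⊔ aᶜ) := by simp
        _ = (v n ⊓ a) ⊔ (v n ⊓ aᶜ) := inf_sup_left ..
        _ ≤ w ⊔ aᶜ := sup_le_sup (by rw [inf_comm]; exact h n) inf_le_right
    calc a ⊓ csup v ≤ a ⊓ (w ⊔ aᶜ) := inf_le_inf_left a h1
      _ = (a ⊓ w) ⊔ (a ⊓ aᶜ) := inf_sup_left ..
      _ ≤ w := by simp
  have disj_csup : ∀ (a : B) (v : ℕ → B), (∀ n, a ⊓ v n = ⊥) → a ⊓ csup v = ⊥ :=
    fun a v h => le_bot_iff.mp (inf_csup_le a v ⊥ fun n => (h n).le)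
  refine ⟨?_, ?_, ?_, ?_, ?_⟩
  · -- axiom 1
    intro s hd
    constructor
    · exact disj_csup _ _ fun n => hd 0 (n + 1) (by omega)
    · apply le_antisymm
      · refine csup_le _ _ fun n => ?_
        cases n with
        | zero => exact le_sup_left
        | succ k => exact le_sup_of_le_right (le_csup (fun n => s (n + 1)) k)
      · exact sup_le (le_csup s 0) (csup_le _ _ fun n => le_csup s (n + 1))
  · -- axiom 2
    intro s t h1 h2
    have hs : ∀ m n, m ≠ n → s m ⊓ s n = ⊥ := fun m n hmn => le_bot_iff.mp
      ((inf_le_inf le_sup_left le_sup_left).trans (h2 m n hmn).le)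
    have ht : ∀ m n, m ≠ n → t m ⊓ t n = ⊥ := fun m n hmn => le_bot_iff.mp
      ((inf_le_inf le_sup_right le_sup_right).trans (h2 m n hmn).le)
    have hst : ∀ m n, s m ⊓ t n = ⊥ := fun m n => by
      rcases eq_or_ne m n with rfl | h
      · exact h1 m
      · exact le_bot_iff.mp ((inf_le_inf le_sup_left le_sup_right).trans (h2 m n h).le)
    refine ⟨hs, ht, ?_, ?_⟩
    · refine disj_csup _ _ fun n => ?_
      rw [inf_comm]
      exact disj_csup (t n) s fun m => by rw [inf_comm]; exact hst m n
    · apply le_antisymm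
      · exact csup_le _ _ fun n => sup_le_sup (le_csup s n) (le_csup t n)
      · exact sup_le (csup_le _ _ fun n => le_sup_left.trans
            (le_csup (fun n => s n ⊔ t n) n))
          (csup_le _ _ fun n => le_sup_right.trans (le_csup (fun n => s n ⊔ t n) n))
  · exact fun a => ⟨inf_bot_eq a, sup_bot_eq a⟩
  · -- axiom 4: refinement
    intro x y c hxy hc hsum
    refine ⟨fun n => x ⊓ c n, fun n => y ⊓ c n, ?_, ?_, ?_, ?_, ?_⟩
    · exact fun m n h => le_bot_iff.mp
        ((inf_le_inf inf_le_right inf_le_right).trans (hc m n h).le)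
    · exact fun m n h => le_bot_iff.mp
        ((inf_le_inf inf_le_right inf_le_right).trans (hc m n h).le)
    · apply le_antisymm
      · have hx : x ⊓ csup c ≤ csup (fun n => x ⊓ c n) :=
          inf_csup_le _ _ _ fun n => le_csup (fun n => x ⊓ c n) n
        rw [← hsum, inf_sup_self] at hx
        exact hx
      · exact csup_le _ _ fun n => inf_le_left
    · apply le_antisymm
      · have hy : y ⊓ csup c ≤ csup (fun n => y ⊓ c n) :=
          inf_csup_le _ _ _ fun n => le_csup (fun n => y ⊓ c n) n
        rw [← hsum, sup_comm, inf_sup_self] at hy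
        exact hy
      · exact csup_le _ _ fun n => inf_le_left
    · intro n
      constructor
      · exact le_bot_iff.mp ((inf_le_inf inf_le_left inf_le_left).trans hxy.le)
      · have h1 : c n ≤ x ⊔ y := hsum ▸ le_csup c n
        calc c n = c n ⊓ (x ⊔ y) := (inf_eq_left.mpr h1).symm
          _ = (c n ⊓ x) ⊔ (c n ⊓ y) := inf_sup_left ..
          _ = (x ⊓ c n) ⊔ (y ⊓ c n) := by rw [inf_comm, inf_comm (c n)]
  · -- axiom 5: remainder
    intro s t h
    set c : B := (csup fun m => (s m)ᶜ)ᶜ with hc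
    have hts : ∀ n, t n ≤ s n := fun n => by rw [(h n).2]; exact le_sup_left
    have hmono : ∀ n k, s (n + k) ≤ s n := by
      intro n k
      induction k with
      | zero => exact le_rfl
      | succ k ih =>
        refine le_trans ?_ ih
        rw [(h (n + k)).2]
        exact le_sup_right
    have smono : ∀ m n, m ≤ n → s n ≤ s m := by
      intro m n hmn
      obtain ⟨k, rfl⟩ := Nat.exists_eq_add_of_le hmn
      exact hmono m k
    have htd : ∀ i j, i ≠ j → t i ⊓ t j = ⊥ := by
      have key : ∀ i j, i < j → t i ⊓ t j = ⊥ := by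
        intro i j hij
        have : t j ≤ s (i + 1) := (hts j).trans (smono (i + 1) j hij)
        exact le_bot_iff.mp ((inf_le_inf le_rfl this).trans (h i).1.le)
      intro i j hij
      rcases lt_or_gt_of_ne hij with hlt | hgt
      · exact key i j hlt
      · rw [inf_comm]; exact key j i hgt
    have hcs : ∀ m, c ≤ s m := fun m => by
      have h1 : (s m)ᶜ ≤ csup fun m => (s m)ᶜ := le_csup (fun m => (s m)ᶜ) m
      calc c ≤ ((s m)ᶜ)ᶜ := compl_le_compl h1
        _ = s m := compl_compl _
    have key : ∀ n k, s n ≤ csup (fun i => t (i + n)) ⊔ s (n + k) := by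
      intro n k
      induction k with
      | zero => exact le_sup_right
      | succ k ih =>
        have htle : t (n + k) ≤ csup fun i => t (i + n) := by
          have := le_csup (fun i => t (i + n)) k
          rwa [add_comm k n] at this
        calc s n ≤ csup (fun i => t (i + n)) ⊔ s (n + k) := ih
          _ = csup (fun i => t (i + n)) ⊔ (t (n + k) ⊔ s (n + k + 1)) := by
              rw [← (h (n + k)).2]
          _ ≤ csup (fun i => t (i + n)) ⊔ (csup (fun i => t (i + n)) ⊔ s (n + k + 1)) :=
              sup_le_sup_left (sup_le_sup_right htle _) _
          _ = csup (fun i => t (i + n)) ⊔ s (n + (k + 1)) := by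
              rw [← sup_assoc, sup_idem, ← Nat.add_assoc]
    refine ⟨c, fun n => ⟨fun i j hij => htd (i + n) (j + n) (by omega), ?_, ?_⟩⟩
    · refine disj_csup _ _ fun i => ?_
      refine le_bot_iff.mp ((inf_le_inf (hcs (i + n + 1)) le_rfl).trans ?_)
      rw [inf_comm]
      exact (h (i + n)).1.le
    · apply le_antisymm
      · have hmain : s n ⊓ csup (fun m => (s m)ᶜ) ≤ csup fun i => t (i + n) := by
          refine inf_csup_le _ _ _ fun m => ?_
          rcases le_or_gt m n with hmn | hnm
          · have : s n ≤ s m := smono m n hmn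
            calc s n ⊓ (s m)ᶜ ≤ s m ⊓ (s m)ᶜ := inf_le_inf_right _ this
              _ = ⊥ := inf_compl_eq_bot
              _ ≤ _ := bot_le
          · obtain ⟨k, rfl⟩ := Nat.exists_eq_add_of_le hnm.le
            calc s n ⊓ (s (n + k))ᶜ
                ≤ (csup (fun i => t (i + n)) ⊔ s (n + k)) ⊓ (s (n + k))ᶜ :=
                  inf_le_inf_right _ (key n k)
              _ = (csup (fun i => t (i + n)) ⊓ (s (n + k))ᶜ) ⊔ (s (n + k) ⊓ (s (n + k))ᶜ) :=
                  inf_sup_right ..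
              _ ≤ csup fun i => t (i + n) := by simp
        have hcompl : cᶜ = csup fun m => (s m)ᶜ := compl_compl _
        calc s n = s n ⊓ (c ⊔ cᶜ) := by simp
          _ = (s n ⊓ c) ⊔ (s n ⊓ cᶜ) := inf_sup_left ..
          _ ≤ c ⊔ csup (fun i => t (i + n)) := by
              rw [hcompl]
              exact sup_le_sup inf_le_right hmain
      · refine sup_le (hcs n) (csup_le _ _ fun i => ?_)
        exact (hts (i + n)).trans (smono n (i + n) (Nat.le_add_left n i))
end

section
/- If A is a generalized cardinal algebra with closure Ā and B is a cardinal algebra, then every GCA homomorphism φ: A → B extends uniquely to a CA homomorphism Ā → B. -/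
namespace GCAtot
variable {τ : Type*} {G : GCA τ}

/-- totality hypotheses bundled -/
def Tot (G : GCA τ) : Prop := (∀ x y, G.addDef x y) ∧ (∀ s, G.sumDef s)

lemma scongr {s t : ℕ → τ} (h : ∀ n, s n = t n) : G.sum s = G.sum t :=
  congrArg G.sum (funext h)

variable (hT : Tot G)
include hT

lemma tl (s : ℕ → τ) : G.sum s = G.add (s 0) (G.sum fun n => s (n + 1)) :=
  (G.sum_tail s (hT.2 s)).2.2

lemma asum (s t : ℕ → τ) :
    G.sum (fun n => G.add (s n) (t n)) = G.add (G.sum s) (G.sum t) :=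
  (G.sum_add s t (fun _ => hT.1 _ _) (hT.2 _)).2.2.2

lemma rem (s t : ℕ → τ) (h : ∀ n, s n = G.add (t n) (s (n + 1))) :
    ∃ c, ∀ n, s n = G.add c (G.sum fun i => t (i + n)) := by
  obtain ⟨c, hc⟩ := G.remainder s t (fun n => ⟨hT.1 _ _, h n⟩)
  exact ⟨c, fun n => (hc n).2.2⟩

lemma zsum : G.sum (fun _ => G.zero) = G.zero := by
  obtain ⟨c, hc⟩ := rem hT (fun _ => G.zero) (fun _ => G.zero)
    (fun n => (G.zero_add _).symm)
  have h0 : G.zero = G.add c (G.sum fun _ => G.zero) := hc 0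
  have hd : G.sum (fun n => if n = 0 then c else G.zero) = G.zero := by
    rw [tl hT]
    have e1 : (fun n => if n + 1 = 0 then c else G.zero) = (fun _ : ℕ => G.zero) := by
      funext n; simp
    rw [e1]
    simpa using h0.symm
  have h2 := asum hT (fun n => if n = 0 then c else G.zero) (fun _ => G.zero)
  have h3 : (fun n => G.add (if n = 0 then c else G.zero) G.zero)
      = (fun n => if n = 0 then c else G.zero) := by
    funext n; exact G.add_zero _
  rw [h3, hd] at h2
  calc G.sum (fun _ => G.zero) = G.add G.zero (G.sum fun _ => G.zero) := (G.zero_add _).symm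
    _ = G.zero := h2.symm

lemma single (j : ℕ) (x : τ) :
    G.sum (fun n => if n = j then x else G.zero) = x := by
  induction j generalizing x with
  | zero =>
    rw [tl hT]
    have e1 : (fun n => if n + 1 = 0 then x else G.zero) = (fun _ : ℕ => G.zero) := by
      funext n; simp
    rw [e1, zsum hT]
    simpa using G.add_zero x
  | succ j ih =>
    rw [tl hT]
    have e1 : (fun n => if n + 1 = j + 1 then x else G.zero)
        = (fun n => if n = j then x else G.zero) := by
      funext n; simp
    rw [e1, ih]
    simpa using G.zero_add x

lemma fin2 (a b : τ) :
    G.sum (fun n => if n = 0 then a else if n = 1 then b else G.zero)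
      = G.add a b := by
  rw [tl hT]
  have e1 : (fun n => if n + 1 = 0 then a else if n + 1 = 1 then b else G.zero)
      = (fun n => if n = 0 then b else G.zero) := by
    funext n; simp
  rw [e1, single hT 0 b]
  simp

lemma comm (a b : τ) : G.add a b = G.add b a := by
  have e1 := asum hT (fun n => if n = 0 then a else G.zero)
      (fun n => if n = 1 then b else G.zero)
  have e2 := asum hT (fun n => if n = 1 then a else G.zero)
      (fun n => if n = 0 then b else G.zero)
  rw [single hT, single hT] at e1 e2
  have f1 : (fun n => G.add (if n = 0 then a else G.zero) (if n = 1 then b else G.zero))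
      = (fun n => if n = 0 then a else if n = 1 then b else G.zero) := by
    funext n
    rcases eq_or_ne n 0 with h | h
    · subst h; simp [G.add_zero]
    · rcases eq_or_ne n 1 with h1 | h1
      · subst h1; simp [G.zero_add]
      · simp [h, h1, G.add_zero]
  have f2 : (fun n => G.add (if n = 1 then a else G.zero) (if n = 0 then b else G.zero))
      = (fun n => if n = 0 then b else if n = 1 then a else G.zero) := by
    funext n
    rcases eq_or_ne n 0 with h | h
    · subst h; simp [G.zero_add]
    · rcases eq_or_ne n 1 with h1 | h1
      · subst h1; simp [G.add_zero]
      · simp [h, h1, G.add_zero]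
  rw [f1, fin2 hT] at e1
  rw [f2, fin2 hT] at e2
  rw [e1, ← e2]

lemma assoc (a b c : τ) : G.add (G.add a b) c = G.add a (G.add b c) := by
  have hfin3 : G.sum (fun n => if n = 0 then a else if n = 1 then b else if n = 2 then c else G.zero)
      = G.add a (G.add b c) := by
    rw [tl hT]
    have h1 : (fun n => if n + 1 = 0 then a else if n + 1 = 1 then b else if n + 1 = 2 then c else G.zero)
        = (fun n => if n = 0 then b else if n = 1 then c else G.zero) := by
      funext n; simp
    rw [h1, fin2 hT]
    simp
  have e := asum hT
      (fun n => if n = 0 then a else if n = 1 then b else G.zero)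
      (fun n => if n = 2 then c else G.zero)
  have f : (fun n => G.add (if n = 0 then a else if n = 1 then b else G.zero) (if n = 2 then c else G.zero))
      = (fun n => if n = 0 then a else if n = 1 then b else if n = 2 then c else G.zero) := by
    funext n
    rcases eq_or_ne n 0 with h | h
    · subst h; simp [G.add_zero]
    · rcases eq_or_ne n 1 with h1 | h1
      · subst h1; simp [G.add_zero]
      · rcases eq_or_ne n 2 with h2 | h2
        · subst h2; simp [h, h1, G.zero_add]
        · simp [h, h1, h2, G.add_zero]
  rw [f, hfin3, fin2 hT, single hT] at e
  exact e.symm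


lemma sumshift (u : ℕ → τ) (n : ℕ) :
    (G.sum fun i => u (i + n)) = G.add (u n) (G.sum fun i => u (i + (n + 1))) := by
  have h := tl hT (fun i => u (i + n))
  simp only [Nat.zero_add] at h
  have e2 : (G.sum fun i => u (i + 1 + n)) = G.sum fun i => u (i + (n + 1)) :=
    scongr (fun i => by congr 1; omega)
  exact h.trans (by rw [e2])

omit hT in
lemma sumzero (u : ℕ → τ) : (G.sum fun i => u (i + 0)) = G.sum u :=
  scongr (fun i => by simp)

lemma extract {s s' : ℕ → τ} (j₀ : ℕ) (x : τ)
    (h0 : s j₀ = G.add x (s' j₀)) (h : ∀ j, j ≠ j₀ → s j = s' j) :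
    G.sum s = G.add x (G.sum s') := by
  have f : (fun j => G.add (if j = j₀ then x else G.zero) (s' j)) = s := by
    funext j
    rcases eq_or_ne j j₀ with hj | hj
    · subst hj; simp [h0]
    · simp [hj, G.zero_add, h j hj]
  calc G.sum s = G.sum (fun j => G.add (if j = j₀ then x else G.zero) (s' j)) := by rw [f]
    _ = G.add (G.sum fun j => if j = j₀ then x else G.zero) (G.sum s') := asum hT _ _
    _ = G.add x (G.sum s') := by rw [single hT]

/-- term is ≤ the sum: sum s = s j₀ + sum (s with j₀ zeroed) -/
lemma term_le (s : ℕ → τ) (j₀ : ℕ) :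
    G.sum s = G.add (s j₀) (G.sum fun j => if j = j₀ then G.zero else s j) := by
  refine extract hT j₀ (s j₀) ?_ ?_
  · simp only [if_pos rfl]
    exact (G.add_zero _).symm
  · intro j hj; simp [hj]

lemma antisymm {a b x y : τ} (hab : a = G.add b x) (hba : b = G.add a y) : a = b := by
  have haw : a = G.add a (G.add y x) := by
    calc a = G.add b x := hab
      _ = G.add (G.add a y) x := by rw [← hba]
      _ = G.add a (G.add y x) := assoc hT _ _ _
  obtain ⟨c, hc⟩ := rem hT (fun _ => a) (fun _ => G.add y x)
    (fun n => by rw [comm hT] at haw; exact haw)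
  have h0 : a = G.add c (G.sum fun _ => G.add y x) := hc 0
  have hyx : (G.sum fun _ : ℕ => G.add y x)
      = G.add (G.sum fun _ : ℕ => y) (G.sum fun _ : ℕ => x) := asum hT _ _
  have hY : (G.sum fun _ : ℕ => y) = G.add y (G.sum fun _ : ℕ => y) := tl hT _
  set Y := G.sum fun _ : ℕ => y
  set X := G.sum fun _ : ℕ => x
  have key : a = G.add a y := by
    calc a = G.add c (G.add Y X) := by rw [h0, hyx]
      _ = G.add c (G.add (G.add y Y) X) := by rw [← hY]
      _ = G.add c (G.add (G.add Y y) X) := by rw [comm hT y Y]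
      _ = G.add c (G.add Y (G.add y X)) := by rw [assoc hT Y y X]
      _ = G.add c (G.add Y (G.add X y)) := by rw [comm hT y X]
      _ = G.add c (G.add (G.add Y X) y) := by rw [← assoc hT Y X y]
      _ = G.add (G.add c (G.add Y X)) y := (assoc hT _ _ _).symm
      _ = G.add a y := by rw [← hyx, ← h0]
  rw [hba, ← key]

/-- pair-block lemma -/
lemma pairblock (u : ℕ → τ) :
    G.sum u = G.sum (fun k => G.add (u (2 * k)) (u (2 * k + 1))) := by
  set v : ℕ → τ := fun k => G.add (u (2 * k)) (u (2 * k + 1)) with hv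
  -- direction 1 : sum v ≤ sum u
  have dir1 : ∃ c, G.sum u = G.add c (G.sum v) := by
    obtain ⟨c, hc⟩ := rem hT (fun k => G.sum fun i => u (i + 2 * k)) v
      (fun k => by
        show (G.sum fun i => u (i + 2 * k))
            = G.add (v k) (G.sum fun i => u (i + 2 * (k + 1)))
        have h1 := sumshift hT u (2 * k)
        have h2 := sumshift hT u (2 * k + 1)
        rw [h1, h2, ← assoc hT]
        have e : (G.sum fun i => u (i + (2 * k + 1 + 1))) = G.sum fun i => u (i + 2 * (k + 1)) :=
          scongr (fun i => by rw [show i + (2 * k + 1 + 1) = i + 2 * (k + 1) from by omega])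
        rw [e])
    refine ⟨c, ?_⟩
    have h0 := hc 0
    have e1 : (G.sum fun i => u (i + 2 * 0)) = G.sum u :=
      scongr (fun i => by rw [show i + 2 * 0 = i from by omega])
    have e2 : (G.sum fun i => v (i + 0)) = G.sum v := sumzero v
    rw [e1, e2] at h0
    exact h0
  -- direction 2 : sum u ≤ sum v
  have dir2 : ∃ c, G.sum v = G.add c (G.sum u) := by
    set M : ℕ → τ := fun n =>
      if n % 2 = 0 then G.sum (fun i => v (i + n / 2))
      else G.add (u n) (G.sum fun i => v (i + (n / 2 + 1))) with hM
    have m_even : ∀ k, M (2 * k) = G.sum (fun i => v (i + k)) := by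
      intro k
      have h1 : (2 * k) % 2 = 0 := by omega
      have h2 : (2 * k) / 2 = k := by omega
      simp [hM, h1, h2]
    have m_odd : ∀ k, M (2 * k + 1) = G.add (u (2 * k + 1)) (G.sum fun i => v (i + (k + 1))) := by
      intro k
      have h1 : (2 * k + 1) % 2 = 1 := by omega
      have h2 : (2 * k + 1) / 2 = k := by omega
      simp [hM, h1, h2]
    obtain ⟨c, hc⟩ := rem hT M u
      (fun n => by
        rcases Nat.even_or_odd n with ⟨k, hk⟩ | ⟨k, hk⟩
        · have hn : n = 2 * k := by omega
          subst hn
          rw [m_even k]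
          have : M (2 * k + 1) = G.add (u (2 * k + 1)) (G.sum fun i => v (i + (k + 1))) := m_odd k
          rw [this, sumshift hT v k, hv, assoc hT]
        · have hn : n = 2 * k + 1 := by omega
          subst hn
          rw [m_odd k]
          have : M (2 * k + 1 + 1) = G.sum (fun i => v (i + (k + 1))) := by
            have e : 2 * k + 1 + 1 = 2 * (k + 1) := by omega
            rw [e, m_even]
          rw [this])
    refine ⟨c, ?_⟩
    have h0 := hc 0
    have hM0 : M 0 = G.sum v := by
      have e : (0:ℕ) = 2 * 0 := rfl
      rw [e, m_even 0]
      exact sumzero v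
    rw [hM0, sumzero u] at h0
    exact h0
  obtain ⟨c1, h1⟩ := dir1
  obtain ⟨c2, h2⟩ := dir2
  exact antisymm hT (h1.trans (comm hT _ _)) (h2.trans (comm hT _ _))

def il (s t : ℕ → τ) : ℕ → τ := fun n => if n % 2 = 0 then s (n / 2) else t (n / 2)

lemma interleave (s t : ℕ → τ) :
    G.sum (il s t) = G.add (G.sum s) (G.sum t) := by
  rw [pairblock hT (il s t)]
  have f : (fun k => G.add (il s t (2 * k)) (il s t (2 * k + 1)))
      = (fun k => G.add (s k) (t k)) := by
    funext k
    have h1 : il s t (2 * k) = s k := by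
      have e1 : (2 * k) % 2 = 0 := by omega
      have e2 : (2 * k) / 2 = k := by omega
      simp [il, e1, e2]
    have h2 : il s t (2 * k + 1) = t k := by
      have e1 : (2 * k + 1) % 2 = 1 := by omega
      have e2 : (2 * k + 1) / 2 = k := by omega
      simp [il, e1, e2]
    rw [h1, h2]
  rw [f, asum hT]

lemma fubini (d : ℕ → ℕ → τ) :
    G.sum (fun n => G.sum (d n)) = G.sum (fun m => G.sum (fun n => d n m)) := by
  have half : ∀ e : ℕ → ℕ → τ, ∃ c,
      G.sum (fun n => G.sum (e n)) = G.add c (G.sum (fun m => G.sum (fun n => e n m))) := by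
    intro e
    obtain ⟨c, hc⟩ := rem hT (fun m => G.sum fun n => G.sum fun j => e n (j + m))
      (fun m => G.sum fun n => e n m)
      (fun m => by
        show (G.sum fun n => G.sum fun j => e n (j + m))
            = G.add (G.sum fun n => e n m) (G.sum fun n => G.sum fun j => e n (j + (m + 1)))
        calc (G.sum fun n => G.sum fun j => e n (j + m))
            = G.sum (fun n => G.add (e n m) (G.sum fun j => e n (j + (m + 1)))) :=
              scongr (fun n => sumshift hT (e n) m)
          _ = G.add (G.sum fun n => e n m) (G.sum fun n => G.sum fun j => e n (j + (m + 1))) :=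
              asum hT _ _)
    refine ⟨c, ?_⟩
    have h0 := hc 0
    have e0 : (G.sum fun n => G.sum fun j => e n (j + 0)) = G.sum fun n => G.sum (e n) :=
      scongr (fun n => sumzero (e n))
    rw [e0] at h0
    have e1 : (G.sum fun i => (fun m => G.sum fun n => e n m) (i + 0))
        = G.sum fun m => G.sum fun n => e n m :=
      sumzero (fun m => G.sum fun n => e n m)
    rw [e1] at h0
    exact h0
  obtain ⟨c1, h1⟩ := half d
  obtain ⟨c2, h2⟩ := half (fun m n => d n m)
  exact antisymm hT (h1.trans (comm hT _ _)) (h2.trans (comm hT _ _))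

lemma leadzero (n : ℕ) (s : ℕ → τ) :
    G.sum (fun m => if m < n then G.zero else s (m - n)) = G.sum s := by
  induction n with
  | zero => exact scongr (fun m => by simp)
  | succ n ih =>
    rw [tl hT]
    have h0 : (if (0:ℕ) < n + 1 then G.zero else s (0 - (n+1))) = G.zero := by simp
    have htl : (fun m => if m + 1 < n + 1 then G.zero else s (m + 1 - (n + 1)))
        = (fun m => if m < n then G.zero else s (m - n)) := by
      funext m
      rcases lt_or_ge m n with h | h
      · simp [h, Nat.lt_succ_of_lt, show m + 1 < n + 1 from by omega]
      · have h1 : ¬ m + 1 < n + 1 := by omega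
        have h2 : ¬ m < n := by omega
        simp [h1, h2, show m + 1 - (n + 1) = m - n from by omega]
    rw [h0, htl, ih, G.zero_add]

end GCAtot

namespace GCAtot
variable {τ : Type*} {G : GCA τ}

/-- finite right-nested sum  w 0 + (w 1 + (... + (w (n-1) + c))) -/
def RF (G : GCA τ) : (ℕ → τ) → ℕ → τ → τ
  | _, 0, c => c
  | w, n+1, c => G.add (w 0) (RF G (fun k => w (k + 1)) n c)

variable (hT : Tot G)
include hT

lemma RF_split : ∀ (n : ℕ) (w : ℕ → τ) (c : τ), RF G w n c = G.add (RF G w n G.zero) c := by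
  intro n
  induction n with
  | zero => intro w c; exact (G.zero_add c).symm
  | succ n ih =>
    intro w c
    show G.add (w 0) (RF G (fun k => w (k + 1)) n c)
        = G.add (G.add (w 0) (RF G (fun k => w (k + 1)) n G.zero)) c
    rw [ih, ← assoc hT]

lemma finsum : ∀ (n : ℕ) (w : ℕ → τ),
    G.sum (fun m => if m < n then w m else G.zero) = RF G w n G.zero := by
  intro n
  induction n with
  | zero =>
    intro w
    have : (fun m => if m < 0 then w m else G.zero) = (fun _ : ℕ => G.zero) := by
      funext m; simp
    rw [this, zsum hT]; rfl
  | succ n ih =>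
    intro w
    rw [tl hT]
    have h0 : (if (0:ℕ) < n + 1 then w 0 else G.zero) = w 0 := by simp
    have htl : (fun m => if m + 1 < n + 1 then w (m + 1) else G.zero)
        = (fun m => if m < n then (fun k => w (k + 1)) m else G.zero) := by
      funext m
      rcases lt_or_ge m n with h | h
      · simp [h, show m + 1 < n + 1 from by omega]
      · have h1 : ¬ m + 1 < n + 1 := by omega
        have h2 : ¬ m < n := by omega
        simp [h1, h2]
    rw [h0, htl, ih]
    rfl

end GCAtot

namespace GCAtot

/-- the pairing enumeration : Jf k = (m, j)  where  k + 1 = 2 ^ m * (2 * j + 1) -/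
def Jf : ℕ → ℕ × ℕ
  | n =>
    if h : n % 2 = 0 then (0, n / 2)
    else ((Jf (n / 2)).1 + 1, (Jf (n / 2)).2)
decreasing_by omega

lemma Jf_even (j : ℕ) : Jf (2 * j) = (0, j) := by
  rw [Jf]
  have h1 : (2 * j) % 2 = 0 := by omega
  have h2 : (2 * j) / 2 = j := by omega
  simp [h1, h2]

lemma Jf_odd (k : ℕ) : Jf (2 * k + 1) = ((Jf k).1 + 1, (Jf k).2) := by
  rw [Jf]
  have h1 : ¬ ((2 * k + 1) % 2 = 0) := by omega
  have h2 : (2 * k + 1) / 2 = k := by omega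
  simp [h1, h2]

/-- number of k' < k landing in row n -/
def cnt (n k : ℕ) : ℕ := ((Finset.range k).filter (fun k' => (Jf k').1 = n)).card

lemma cnt_succ (n k : ℕ) :
    cnt n (k + 1) = cnt n k + (if (Jf k).1 = n then 1 else 0) := by
  unfold cnt
  rw [Finset.range_add_one, Finset.filter_insert]
  split_ifs with h
  · rw [Finset.card_insert_of_notMem (by simp)]
  · simp

lemma cnt_rec : ∀ k : ℕ, cnt 0 k = (k + 1) / 2 ∧ ∀ m, cnt (m + 1) k = cnt m (k / 2) := by
  intro k
  induction k with
  | zero => constructor <;> simp [cnt]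
  | succ k ih =>
    have fst0 : ∀ j, (Jf (2 * j)).1 = 0 := fun j => by rw [Jf_even]
    have fsts : ∀ j, (Jf (2 * j + 1)).1 = (Jf j).1 + 1 := fun j => by rw [Jf_odd]
    constructor
    · rw [cnt_succ, ih.1]
      rcases Nat.even_or_odd k with ⟨j, hj⟩ | ⟨j, hj⟩
      · have : (Jf k).1 = 0 := by rw [show k = 2 * j from by omega, fst0]
        simp [this]; omega
      · have : (Jf k).1 = (Jf j).1 + 1 := by rw [show k = 2 * j + 1 from by omega, fsts]
        simp [this]; omega
    · intro m
      rw [cnt_succ, ih.2]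
      rcases Nat.even_or_odd k with ⟨j, hj⟩ | ⟨j, hj⟩
      · have hk : k = 2 * j := by omega
        have : (Jf k).1 = 0 := by rw [hk, fst0]
        simp [this, hk, fst0 j, show (2 * j + 1) / 2 = 2 * j / 2 from by omega]
      · have hk : k = 2 * j + 1 := by omega
        have h1 : (Jf k).1 = (Jf j).1 + 1 := by rw [hk, fsts]
        have h2 : k / 2 = j := by omega
        have h3 : (k + 1) / 2 = j + 1 := by omega
        rw [h1, h2, h3, cnt_succ]
        simp [Nat.succ_inj]

lemma Jf_snd : ∀ k : ℕ, (Jf k).2 = cnt (Jf k).1 k := by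
  intro k
  induction k using Nat.strong_induction_on with
  | _ k ih =>
    rcases Nat.even_or_odd k with ⟨j, hj⟩ | ⟨j, hj⟩
    · have hk : k = 2 * j := by omega
      subst hk
      rw [Jf_even]
      show j = cnt 0 (2 * j)
      rw [(cnt_rec (2 * j)).1]
      omega
    · have hk : k = 2 * j + 1 := by omega
      subst hk
      rw [Jf_odd]
      show (Jf j).2 = cnt ((Jf j).1 + 1) (2 * j + 1)
      rw [(cnt_rec (2 * j + 1)).2, show (2 * j + 1) / 2 = j from by omega]
      exact ih j (by omega)

variable {τ : Type*} {G : GCA τ} (hT : Tot G)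
include hT

omit hT in
lemma RF_congr : ∀ (n : ℕ) (w w' : ℕ → τ) (c : τ), (∀ k, w k = w' k) →
    RF G w n c = RF G w' n c := by
  intro n
  induction n with
  | zero => intro w w' c _; rfl
  | succ n ih =>
    intro w w' c h
    show G.add (w 0) (RF G (fun k => w (k + 1)) n c)
        = G.add (w' 0) (RF G (fun k => w' (k + 1)) n c)
    rw [h 0, ih (fun k => w (k + 1)) (fun k => w' (k + 1)) c (fun k => h (k + 1))]

/-- data produced by one round of the alternating peeling process -/
def StepP (G : GCA τ) (U V : ℕ → τ)
    (w : ((ℕ → τ) × (ℕ → τ)) × ((ℕ → τ) × (ℕ → τ))) : Prop :=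
  G.sum w.1.1 = U 0 ∧
  (∀ j, V j = G.add (w.1.1 j) (w.1.2 j)) ∧
  G.sum w.2.1 = w.1.2 0 ∧
  (∀ j, U (j + 1) = G.add (w.2.1 j) (w.2.2 j)) ∧
  G.sum w.2.2 = G.sum (fun j => w.1.2 (j + 1))

lemma step_ex (U V : ℕ → τ) (h : G.sum U = G.sum V) : ∃ w, StepP G U V w := by
  obtain ⟨s, q, _, _, hs, hq, hsq⟩ :=
    G.refinement (U 0) (G.sum fun j => U (j + 1)) V (hT.1 _ _) (hT.2 V)
      ((tl hT U).symm.trans h)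
  obtain ⟨t, r, _, _, ht, hr, htr⟩ :=
    G.refinement (q 0) (G.sum fun j => q (j + 1)) (fun j => U (j + 1)) (hT.1 _ _) (hT.2 _)
      ((tl hT q).symm.trans hq)
  exact ⟨((s, q), (t, r)), hs, fun j => ((hsq j).2).symm, ht,
    fun j => ((htr j).2).symm, hr⟩

noncomputable def step (U V : ℕ → τ) (h : G.sum U = G.sum V) :
    {w : ((ℕ → τ) × (ℕ → τ)) × ((ℕ → τ) × (ℕ → τ)) // StepP G U V w} :=
  ⟨Classical.choose (step_ex hT U V h), Classical.choose_spec (step_ex hT U V h)⟩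

/-- the sequence of states of the peeling process -/
noncomputable def chainSt (a b : ℕ → τ) (h : G.sum a = G.sum b) :
    ℕ → Σ' (p : (ℕ → τ) × (ℕ → τ)), G.sum p.1 = G.sum p.2
  | 0 => ⟨(a, b), h⟩
  | n + 1 =>
    let p := chainSt a b h n
    let w := step hT p.1.1 p.1.2 p.2
    ⟨(w.1.2.2, fun j => w.1.1.2 (j + 1)), w.2.2.2.2.2⟩

/-- countable refinement theorem -/
lemma refine (a b : ℕ → τ) (h : G.sum a = G.sum b) :
    ∃ d : ℕ → ℕ → τ, (∀ n, G.sum (d n) = a n) ∧ (∀ m, G.sum (fun n => d n m) = b m) := by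
  classical
  set Un : ℕ → ℕ → τ := fun n => (chainSt hT a b h n).1.1 with hUn
  set Vn : ℕ → ℕ → τ := fun n => (chainSt hT a b h n).1.2 with hVn
  set W : ∀ n : ℕ, {w : ((ℕ → τ) × (ℕ → τ)) × ((ℕ → τ) × (ℕ → τ)) //
      StepP G (Un n) (Vn n) w} :=
    fun n => step hT (Un n) (Vn n) (chainSt hT a b h n).2 with hW
  set sP : ℕ → ℕ → τ := fun n => (W n).1.1.1 with hsP
  set qP : ℕ → ℕ → τ := fun n => (W n).1.1.2 with hqP
  set tP : ℕ → ℕ → τ := fun n => (W n).1.2.1 with htP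
  have S1 : ∀ n, G.sum (sP n) = Un n 0 := fun n => (W n).2.1
  have S2 : ∀ n j, Vn n j = G.add (sP n j) (qP n j) := fun n => (W n).2.2.1
  have S3 : ∀ n, G.sum (tP n) = qP n 0 := fun n => (W n).2.2.2.1
  have S4 : ∀ n j, Un n (j + 1) = G.add (tP n j) (Un (n + 1) j) := fun n => (W n).2.2.2.2.1
  have hU0 : Un 0 = a := rfl
  have hV0 : Vn 0 = b := rfl
  have hVsucc : ∀ n, Vn (n + 1) = fun j => qP n (j + 1) := fun n => rfl
  -- descent along rows
  have descU : ∀ (j r : ℕ), Un r j = RF G (fun k => tP (r + k) (j - 1 - k)) j (Un (r + j) 0) := by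
    intro j
    induction j with
    | zero => intro r; show Un r 0 = Un (r + 0) 0; rw [Nat.add_zero]
    | succ j ih =>
      intro r
      show Un r (j + 1) = G.add (tP r j)
        (RF G (fun k => tP (r + (k + 1)) (j - (k + 1))) j (Un (r + (j + 1)) 0))
      rw [S4 r j, ih (r + 1)]
      congr 1
      rw [show r + 1 + j = r + (j + 1) from by omega]
      exact RF_congr j _ _ _
        (fun k => by
          rw [show r + 1 + k = r + (k + 1) from by omega,
            show j - 1 - k = j - (k + 1) from by omega])
  -- descent along columns
  have descV : ∀ (j r : ℕ),
      Vn r j = RF G (fun k => sP (r + k) (j - k)) (j + 1) (G.sum (tP (r + j))) := by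
    intro j
    induction j with
    | zero =>
      intro r
      show Vn r 0 = G.add (sP r 0) (G.sum (tP r))
      rw [S3 r]
      exact S2 r 0
    | succ j ih =>
      intro r
      show Vn r (j + 1) = G.add (sP r (j + 1))
        (RF G (fun k => sP (r + (k + 1)) (j + 1 - (k + 1))) (j + 1) (G.sum (tP (r + (j + 1)))))
      have hq : qP r (j + 1) = Vn (r + 1) j := by rw [hVsucc r]
      rw [S2 r (j + 1), hq, ih (r + 1)]
      congr 1
      rw [show r + 1 + j = r + (j + 1) from by omega]
      exact RF_congr (j + 1) _ _ _
        (fun k => by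
          rw [show r + 1 + k = r + (k + 1) from by omega,
            show j - k = j + 1 - (k + 1) from by omega])
  -- the refining matrix
  refine ⟨fun n m => G.add (if n ≤ m then sP n (m - n) else G.zero)
      (if m < n then tP m (n - m - 1) else G.zero), ?_, ?_⟩
  · intro n
    have hx : G.sum (fun m => if n ≤ m then sP n (m - n) else G.zero) = Un n 0 := by
      have e : (fun m => if n ≤ m then sP n (m - n) else G.zero)
          = (fun m => if m < n then G.zero else sP n (m - n)) := by
        funext m
        rcases le_or_gt n m with hm | hm
        · simp [hm, show ¬ m < n from by omega]
        · simp [hm, show ¬ n ≤ m from by omega]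
      rw [e, leadzero hT, S1]
    have hy : G.sum (fun m => if m < n then tP m (n - m - 1) else G.zero)
        = RF G (fun m => tP m (n - m - 1)) n G.zero := finsum hT n _
    rw [asum hT, hx, hy, comm hT, ← RF_split hT]
    have := descU n 0
    rw [hU0] at this
    rw [show (0:ℕ) + n = n from by omega] at this
    rw [this]
    exact (RF_congr n _ _ _ (fun k => by congr 1 <;> omega)).symm
  · intro m
    have hx : G.sum (fun n => if n ≤ m then sP n (m - n) else G.zero)
        = RF G (fun n => sP n (m - n)) (m + 1) G.zero := by
      have e : (fun n => if n ≤ m then sP n (m - n) else G.zero)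
          = (fun n => if n < m + 1 then sP n (m - n) else G.zero) := by
        funext n
        rcases le_or_gt n m with hm | hm
        · simp [hm, show n < m + 1 from by omega]
        · simp [show ¬ n ≤ m from by omega, show ¬ n < m + 1 from by omega]
      rw [e, finsum hT]
    have hy : G.sum (fun n => if m < n then tP m (n - m - 1) else G.zero) = G.sum (tP m) := by
      have e : (fun n => if m < n then tP m (n - m - 1) else G.zero)
          = (fun n => if n < m + 1 then G.zero else tP m (n - (m + 1))) := by
        funext n
        rcases le_or_gt n m with hm | hm
        · simp [show ¬ m < n from by omega, show n < m + 1 from by omega]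
        · simp [show m < n from by omega, show ¬ n < m + 1 from by omega,
            show n - m - 1 = n - (m + 1) from by omega]
      rw [e, leadzero hT]
    rw [asum hT, hx, hy, ← RF_split hT]
    have := descV m 0
    rw [hV0] at this
    rw [show (0:ℕ) + m = m from by omega] at this
    rw [this]
    exact (RF_congr (m + 1) _ _ _ (fun k => by congr 1 <;> omega)).symm

lemma pairing (d : ℕ → ℕ → τ) :
    G.sum (fun k => d (Jf k).1 (Jf k).2) = G.sum (fun n => G.sum (d n)) := by
  -- direction 1 : sum of rows ≤ diagonal sum
  have dir1 : ∃ c, G.sum (fun k => d (Jf k).1 (Jf k).2)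
      = G.add c (G.sum (fun n => G.sum (d n))) := by
    obtain ⟨c, hc⟩ := rem hT (fun M => G.sum (fun k => d ((Jf k).1 + M) (Jf k).2))
      (fun M => G.sum (d M))
      (fun M => by
        show G.sum (fun k => d ((Jf k).1 + M) (Jf k).2)
            = G.add (G.sum (d M)) (G.sum (fun k => d ((Jf k).1 + (M + 1)) (Jf k).2))
        have f : (fun k => d ((Jf k).1 + M) (Jf k).2)
            = il (d M) (fun k => d ((Jf k).1 + (M + 1)) (Jf k).2) := by
          funext k
          rcases Nat.even_or_odd k with ⟨j, hj⟩ | ⟨j, hj⟩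
          · have hk : k = 2 * j := by omega
            subst hk
            have e1 : (2 * j) % 2 = 0 := by omega
            have e2 : (2 * j) / 2 = j := by omega
            simp [il, e1, e2, Jf_even]
          · have hk : k = 2 * j + 1 := by omega
            subst hk
            have e1 : ¬ ((2 * j + 1) % 2 = 0) := by omega
            have e2 : (2 * j + 1) / 2 = j := by omega
            simp [il, e1, e2, Jf_odd, show (Jf j).1 + 1 + M = (Jf j).1 + (M + 1) from by omega]
        rw [f, interleave hT])
    refine ⟨c, ?_⟩
    have h0 := hc 0
    have e1 : (G.sum fun k => d ((Jf k).1 + 0) (Jf k).2) = G.sum fun k => d (Jf k).1 (Jf k).2 :=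
      scongr (fun k => by rw [Nat.add_zero])
    have e2 : (G.sum fun i => (fun M => G.sum (d M)) (i + 0)) = G.sum fun n => G.sum (d n) :=
      sumzero (G := G) (fun M => G.sum (d M))
    rw [e1, e2] at h0
    exact h0
  -- direction 2 : diagonal sum ≤ sum of rows
  have dir2 : ∃ c, G.sum (fun n => G.sum (d n))
      = G.add c (G.sum (fun k => d (Jf k).1 (Jf k).2)) := by
    obtain ⟨c, hc⟩ := rem hT (fun k => G.sum (fun n => G.sum (fun i => d n (i + cnt n k))))
      (fun k => d (Jf k).1 (Jf k).2)
      (fun k => by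
        show G.sum (fun n => G.sum (fun i => d n (i + cnt n k)))
            = G.add (d (Jf k).1 (Jf k).2)
                (G.sum (fun n => G.sum (fun i => d n (i + cnt n (k + 1)))))
        refine extract hT (Jf k).1 (d (Jf k).1 (Jf k).2) ?_ ?_
        · show G.sum (fun i => d (Jf k).1 (i + cnt (Jf k).1 k))
            = G.add (d (Jf k).1 (Jf k).2) (G.sum (fun i => d (Jf k).1 (i + cnt (Jf k).1 (k + 1))))
          have hstep : cnt (Jf k).1 (k + 1) = cnt (Jf k).1 k + 1 := by
            rw [cnt_succ]; simp
          rw [hstep, ← Jf_snd k]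
          exact sumshift hT (d (Jf k).1) ((Jf k).2)
        · intro n hn
          show G.sum (fun i => d n (i + cnt n k)) = G.sum (fun i => d n (i + cnt n (k + 1)))
          have : cnt n (k + 1) = cnt n k := by
            rw [cnt_succ]; simp [Ne.symm hn]
          rw [this])
    refine ⟨c, ?_⟩
    have h0 := hc 0
    have e1 : (G.sum fun n => G.sum fun i => d n (i + cnt n 0))
        = G.sum fun n => G.sum (d n) := by
      refine scongr (fun n => ?_)
      have : cnt n 0 = 0 := by simp [cnt]
      rw [this]
      exact sumzero (d n)
    have e2 : (G.sum fun i => (fun k => d (Jf k).1 (Jf k).2) (i + 0))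
        = G.sum fun k => d (Jf k).1 (Jf k).2 := sumzero (G := G) (fun k => d (Jf k).1 (Jf k).2)
    rw [e1, e2] at h0
    exact h0
  obtain ⟨c1, h1⟩ := dir1
  obtain ⟨c2, h2⟩ := dir2
  exact antisymm hT (h1.trans (comm hT _ _)) (h2.trans (comm hT _ _))

end GCAtot

/-- A homomorphism of GCAs: preserves `0`, defined binary sums, and defined
countable sums (including their definedness). -/
def GCA.IsHom {α β : Type*} (A : GCA α) (B : GCA β) (f : α → β) : Prop :=
  f A.zero = B.zero ∧
  (∀ a b, A.addDef a b → B.addDef (f a) (f b) ∧ f (A.add a b) = B.add (f a) (f b)) ∧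
  (∀ s : ℕ → α, A.sumDef s →
    B.sumDef (fun n => f (s n)) ∧ f (A.sum s) = B.sum (fun n => f (s n)))

/-- If `A` is a GCA with closure `Ā` (a cardinal algebra, i.e. a GCA with
total operations, containing `A` compatibly and generated by countable sums of
elements of `A`) and `C` is a cardinal algebra, then every GCA homomorphism
`φ : A → C` extends uniquely to a homomorphism `Ā → C`. -/
theorem GCA.closure_extension {α β γ : Type*}
    (A : GCA α) (Abar : GCA β) (C : GCA γ)
    -- `Ā` and `C` are cardinal algebras: their operations are total
    (hAbarAdd : ∀ x y, Abar.addDef x y) (hAbarSum : ∀ s, Abar.sumDef s)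
    (hCAdd : ∀ x y, C.addDef x y) (hCSum : ∀ s, C.sumDef s)
    -- `A` is contained in `Ā` via `i`:
    (i : α → β) (hinj : Function.Injective i)
    (hzero : i A.zero = Abar.zero)
    (hadd : ∀ a b, A.addDef a b → i (A.add a b) = Abar.add (i a) (i b))
    -- sums of elements of `A` agree in `A` and in `Ā`:
    (hsum : ∀ (a : α) (s : ℕ → α),
      (A.sumDef s ∧ A.sum s = a) ↔ Abar.sum (fun n => i (s n)) = i a)
    -- `A` generates `Ā`:
    (hgen : ∀ b : β, ∃ s : ℕ → α, b = Abar.sum (fun n => i (s n)))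
    (φ : α → γ) (hφ : A.IsHom C φ) :
    ∃! ψ : β → γ, Abar.IsHom C ψ ∧ ∀ a, ψ (i a) = φ a := by
    classical
  have hTb : GCAtot.Tot Abar := ⟨hAbarAdd, hAbarSum⟩
  have hTc : GCAtot.Tot C := ⟨hCAdd, hCSum⟩
  -- downward closedness of the image of `i`
  have dc : ∀ x y (a : α), Abar.add x y = i a → ∃ a', i a' = x := by
    intro x y a hxy
    obtain ⟨s, hs⟩ := hgen x
    obtain ⟨t, ht⟩ := hgen y
    set u : ℕ → α := GCAtot.il s t with hu
    have hiu : (fun n => i (u n)) = GCAtot.il (fun n => i (s n)) (fun n => i (t n)) := by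
      funext n
      simp only [hu, GCAtot.il]
      split_ifs <;> rfl
    have hsum_u : Abar.sum (fun n => i (u n)) = i a := by
      rw [hiu, GCAtot.interleave hTb, ← hs, ← ht, hxy]
    obtain ⟨hdefu, hsumu⟩ := (hsum a u).mpr hsum_u
    set s' : ℕ → α := fun n => if n % 2 = 0 then s (n / 2) else A.zero with hs'
    set t' : ℕ → α := fun n => if n % 2 = 0 then A.zero else t (n / 2) with ht'
    have hu_eq : u = fun n => A.add (s' n) (t' n) := by
      funext n
      simp only [hu, hs', ht', GCAtot.il]
      split_ifs with hpar
      · exact (A.add_zero _).symm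
      · exact (A.zero_add _).symm
    have hdef2 : A.sumDef (fun n => A.add (s' n) (t' n)) := by rw [← hu_eq]; exact hdefu
    obtain ⟨hdefs', hdeft', _, hsum_split⟩ := A.sum_add s' t'
      (fun n => by
        simp only [hs', ht']
        split_ifs
        · exact A.addDef_zero_right _
        · exact A.addDef_zero_left _) hdef2
    refine ⟨A.sum s', ?_⟩
    have h1 : Abar.sum (fun n => i (s' n)) = i (A.sum s') :=
      (hsum (A.sum s') s').mp ⟨hdefs', rfl⟩
    have h2 : (fun n => i (s' n)) = GCAtot.il (fun n => i (s n)) (fun _ => Abar.zero) := by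
      funext n
      simp only [hs', GCAtot.il]
      split_ifs
      · rfl
      · exact hzero
    have h3 : Abar.sum (fun n => i (s' n)) = x := by
      rw [h2, GCAtot.interleave hTb, GCAtot.zsum hTb, Abar.add_zero, ← hs]
    rw [← h1, h3]
  -- key well-definedness lemma
  have key : ∀ s t : ℕ → α,
      Abar.sum (fun n => i (s n)) = Abar.sum (fun n => i (t n)) →
      C.sum (fun n => φ (s n)) = C.sum (fun n => φ (t n)) := by
    intro s t hst
    obtain ⟨d, hrow, hcol⟩ := GCAtot.refine hTb (fun n => i (s n)) (fun n => i (t n)) hst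
    have hdim : ∀ n m, ∃ a', i a' = d n m := by
      intro n m
      have hterm := GCAtot.term_le hTb (d n) m
      rw [hrow n] at hterm
      exact dc (d n m) _ (s n) hterm.symm
    choose cm hcm using hdim
    have hrowA : ∀ n, φ (s n) = C.sum (fun m => φ (cm n m)) := by
      intro n
      have h1 : Abar.sum (fun m => i (cm n m)) = i (s n) := by
        rw [show (fun m => i (cm n m)) = d n from funext fun m => hcm n m]
        exact hrow n
      obtain ⟨hdef, hsum'⟩ := (hsum (s n) (cm n)).mpr h1
      have h2 := (hφ.2.2 (cm n) hdef).2
      rw [hsum'] at h2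
      exact h2
    have hcolA : ∀ m, φ (t m) = C.sum (fun n => φ (cm n m)) := by
      intro m
      have h1 : Abar.sum (fun n => i (cm n m)) = i (t m) := by
        rw [show (fun n => i (cm n m)) = (fun n => d n m) from funext fun n => hcm n m]
        exact hcol m
      obtain ⟨hdef, hsum'⟩ := (hsum (t m) (fun n => cm n m)).mpr h1
      have h2 := (hφ.2.2 (fun n => cm n m) hdef).2
      rw [hsum'] at h2
      exact h2
    calc C.sum (fun n => φ (s n)) = C.sum (fun n => C.sum (fun m => φ (cm n m))) :=
          GCAtot.scongr (fun n => hrowA n)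
      _ = C.sum (fun m => C.sum (fun n => φ (cm n m))) := GCAtot.fubini hTc _
      _ = C.sum (fun m => φ (t m)) := (GCAtot.scongr (fun m => hcolA m)).symm
  -- the extension
  obtain ⟨ψ, hψdef⟩ : ∃ ψ : β → γ,
      ∀ x, ψ x = C.sum (fun n => φ (Classical.choose (hgen x) n)) := ⟨_, fun _ => rfl⟩
  have ψspec : ∀ u : ℕ → α, ψ (Abar.sum (fun n => i (u n))) = C.sum (fun n => φ (u n)) := by
    intro u
    rw [hψdef]
    exact key _ u (Classical.choose_spec (hgen (Abar.sum (fun n => i (u n))))).symm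
  have ψi : ∀ a, ψ (i a) = φ a := by
    intro a
    set δ : ℕ → α := fun n => if n = 0 then a else A.zero with hδ
    have h1 : Abar.sum (fun n => i (δ n)) = i a := by
      have e : (fun n => i (δ n)) = (fun n => if n = 0 then i a else Abar.zero) := by
        funext n
        simp only [hδ]
        split_ifs
        · rfl
        · exact hzero
      rw [e, GCAtot.single hTb 0 (i a)]
    have h2 := ψspec δ
    rw [h1] at h2
    rw [h2]
    have e : (fun n => φ (δ n)) = (fun n => if n = 0 then φ a else C.zero) := by
      funext n
      simp only [hδ]
      split_ifs
      · rfl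
      · exact hφ.1
    rw [e, GCAtot.single hTc 0 (φ a)]
  refine ⟨ψ, ⟨⟨?_, ?_, ?_⟩, ψi⟩, ?_⟩
  · -- zero
    rw [← hzero, ψi, hφ.1]
  · -- binary add
    intro x y _
    refine ⟨hCAdd _ _, ?_⟩
    obtain ⟨s, hs⟩ := hgen x
    obtain ⟨t, ht⟩ := hgen y
    have hxy : Abar.add x y = Abar.sum (fun n => i (GCAtot.il s t n)) := by
      have e : (fun n => i (GCAtot.il s t n))
          = GCAtot.il (fun n => i (s n)) (fun n => i (t n)) := by
        funext n
        simp only [GCAtot.il]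
        split_ifs <;> rfl
      rw [e, GCAtot.interleave hTb, ← hs, ← ht]
    rw [hxy, ψspec]
    have e2 : (fun n => φ (GCAtot.il s t n))
        = GCAtot.il (fun n => φ (s n)) (fun n => φ (t n)) := by
      funext n
      simp only [GCAtot.il]
      split_ifs <;> rfl
    rw [e2, GCAtot.interleave hTc, hs, ht, ψspec, ψspec]
  · -- countable sums
    intro S _
    refine ⟨hCSum _, ?_⟩
    set sn : ℕ → ℕ → α := fun n => Classical.choose (hgen (S n)) with hsn
    have hSn : ∀ n, S n = Abar.sum (fun m => i (sn n m)) :=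
      fun n => Classical.choose_spec (hgen (S n))
    have htot : Abar.sum S
        = Abar.sum (fun k => i (sn (GCAtot.Jf k).1 (GCAtot.Jf k).2)) := by
      rw [GCAtot.pairing hTb (fun n m => i (sn n m))]
      exact GCAtot.scongr (fun n => hSn n)
    rw [htot, ψspec, GCAtot.pairing hTc (fun n m => φ (sn n m))]
    refine GCAtot.scongr (fun n => ?_)
    have h2 := ψspec (sn n)
    rw [← hSn n] at h2
    exact h2.symm
  · -- uniqueness
    intro ψ' hψ'
    obtain ⟨hom', hext'⟩ := hψ'
    funext x
    obtain ⟨s, hs⟩ := hgen x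
    have h1 := (hom'.2.2 (fun n => i (s n)) (hAbarSum _)).2
    rw [← hs] at h1
    have h2 : (fun n => ψ' (i (s n))) = (fun n => φ (s n)) :=
      funext (fun n => hext' (s n))
    rw [h2] at h1
    rw [h1, hs, ψspec]
end

section
/- For any generalized cardinal algebra A, the set Hom(A, ℝ⁺) of GCA homomorphisms from A to the nonnegative reals, under pointwise addition, is a cancellative generalized cardinal algebra that admits binary meets with respect to its induced order. -/
open scoped NNReal

/-- A finite measure on a GCA `A`: a homomorphism `A → ℝ⁺`, where countable
sums in `ℝ⁺ = ℝ≥0` are convergent series. -/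
def GCA.IsMeasure {α : Type*} (A : GCA α) (μ : α → ℝ≥0) : Prop :=
  μ A.zero = 0 ∧
  (∀ a b, A.addDef a b → μ (A.add a b) = μ a + μ b) ∧
  (∀ s : ℕ → α, A.sumDef s → HasSum (fun n => μ (s n)) (μ (A.sum s)))

/-- An action of a group `Γ` on a GCA `A`: a group action such that each map
`a ↦ γ a` is a GCA homomorphism. -/
def GCA.IsAction {α Γ : Type*} [Group Γ] (A : GCA α) (act : Γ → α → α) : Prop :=
  (∀ a, act 1 a = a) ∧
  (∀ γ δ a, act γ (act δ a) = act (γ * δ) a) ∧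
  (∀ γ : Γ,
    act γ A.zero = A.zero ∧
    (∀ a b, A.addDef a b →
      A.addDef (act γ a) (act γ b) ∧ act γ (A.add a b) = A.add (act γ a) (act γ b)) ∧
    (∀ s : ℕ → α, A.sumDef s →
      A.sumDef (fun n => act γ (s n)) ∧ act γ (A.sum s) = A.sum (fun n => act γ (s n))))

/-- `a` and `b` are equidecomposable with respect to an action of `Γ` on a GCA
`A` if there is a countable family `(c n)` with labels `(g n)` in `Γ` such
that `a = ∑ₙ c n` and `b = ∑ₙ (g n) • (c n)` (this is the statement
`a = ∑_γ a_γ`, `b = ∑_γ γ a_γ`, with each `γ` allowed to label several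
pieces). -/
def GCA.Equidecomposable {α Γ : Type*} [Group Γ] (A : GCA α) (act : Γ → α → α)
    (a b : α) : Prop :=
  ∃ (c : ℕ → α) (g : ℕ → Γ),
    A.sumDef c ∧ A.sum c = a ∧
    A.sumDef (fun n => act (g n) (c n)) ∧ A.sum (fun n => act (g n) (c n)) = b

/-- `m` is the meet (greatest lower bound) of `a` and `b` in the order of the
GCA `A`. -/
def GCA.IsMeet {α : Type*} (A : GCA α) (a b m : α) : Prop :=
  A.le m a ∧ A.le m b ∧ ∀ x, A.le x a → A.le x b → A.le x m

/-- The induced order on finite measures on `A`: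
`μ ≤ ν` iff `μ + l = ν` for some finite measure `l`. -/
def GCA.MeasLe {α : Type*} (A : GCA α) (μ ν : α → ℝ≥0) : Prop :=
  ∃ l : α → ℝ≥0, A.IsMeasure l ∧ μ + l = ν

/-- The countable sum in `Hom(A, ℝ⁺)`: `∑ₙ s n = f` is defined iff the
pointwise sums of values converge to the values of `f`, and `f` is itself a
homomorphism. -/
def GCA.MeasSum {α : Type*} (A : GCA α) (s : ℕ → α → ℝ≥0) (f : α → ℝ≥0) : Prop :=
  (∀ x, HasSum (fun n => s n x) (f x)) ∧ A.IsMeasure f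

/-!
Apart from meets and refinement, everything is inherited pointwise from `ℝ≥0`; the only point is
that a pointwise convergent series of homomorphisms is again a homomorphism, which is Tonelli for
nonnegative double series.

The meet of `μ` and `ν` is `(μ ⊓ ν) a = inf {μ b + ν c | a = b + c}`. It is countably additive:
the refinement axiom of `A` splits a decomposition of `∑ₙ aₙ` into decompositions of the `aₙ`, and
conversely near-optimal decompositions of the `aₙ`, with errors summing to less than `ε`, add up to
a decomposition of `∑ₙ aₙ`. Binary additivity follows by summing `(a, b, 0, 0, …)`.

Refinement of `μ + ν = ∑ₙ cₙ` is greedy: from `r₀ = μ` put `sₙ = rₙ ⊓ cₙ` and `rₙ₊₁ = rₙ - sₙ`.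
As `rₙ ≤ cₙ + ∑_{k>n} c_k` implies `rₙ ≤ sₙ + ∑_{k>n} c_k`, the rests are bounded by the tails of
`∑ c`, hence tend to `0`; so `μ = ∑ sₙ` and `tₙ = cₙ - sₙ` sums to `ν`. For the remainder axiom,
`sₙ - ∑_{k ≥ n} t_k` does not depend on `n`.
-/

theorem NNReal.hasSum_tsub {ι : Type*} {f g : ι → ℝ≥0} {a b : ℝ≥0} (hf : HasSum f a)
    (hg : HasSum g b) (hgf : g ≤ f) : HasSum (f - g) (a - b) := by
  rw [← NNReal.hasSum_coe, NNReal.coe_sub (hasSum_le hgf hg hf)]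
  simp only [Pi.sub_apply, NNReal.coe_sub (hgf _)]
  exact (NNReal.hasSum_coe.2 hf).sub (NNReal.hasSum_coe.2 hg)

namespace GCA

open Filter Topology

variable {α : Type*} (A : GCA α)

theorem sumDef_const_zero : A.sumDef fun _ => A.zero := by
  obtain ⟨_, hc⟩ := A.remainder (fun _ => A.zero) (fun _ => A.zero)
    fun _ => ⟨A.addDef_zero_right _, (A.add_zero _).symm⟩
  exact (hc 0).1

theorem sum_const_zero : A.sum (fun _ => A.zero) = A.zero := by
  -- Refining `∑ 0 + 0 = ∑ 0` yields `t` with `∑ t = 0`; then `∑ t = ∑ (t + 0) = ∑ t + ∑ 0`.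
  obtain ⟨-, t, -, ht, -, ht₀, -⟩ := A.refinement (A.sum fun _ => A.zero) A.zero (fun _ => A.zero)
    (A.addDef_zero_right _) A.sumDef_const_zero (A.add_zero _)
  have hadd : (fun n => A.add (t n) A.zero) = t := funext fun n => A.add_zero _
  have h := (A.sum_add t (fun _ => A.zero) (fun _ => A.addDef_zero_right _) (by rwa [hadd])).2.2.2
  rwa [hadd, ht₀, A.zero_add, eq_comm] at h

def pairSeq (a b : α) : ℕ → α
  | 0 => a
  | 1 => b
  | _ + 2 => A.zero

theorem sumDef_pairSeq {a b : α} (h : A.addDef a b) : A.sumDef (A.pairSeq a b) := by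
  obtain ⟨_, hc⟩ := A.remainder (A.pairSeq (A.add a b) b) (A.pairSeq a b) fun
    | 0 => ⟨h, rfl⟩
    | 1 => ⟨A.addDef_zero_right b, (A.add_zero b).symm⟩
    | _ + 2 => ⟨A.addDef_zero_right A.zero, (A.add_zero A.zero).symm⟩
  exact (hc 0).1

theorem sum_pairSeq {a b : α} (h : A.addDef a b) : A.sum (A.pairSeq a b) = A.add a b := by
  have htail : (fun n => A.pairSeq a b (n + 1)) = A.pairSeq b A.zero := by
    funext n; rcases n with _ | _ | n <;> rfl
  have htail₂ : (fun n => A.pairSeq b A.zero (n + 1)) = fun _ => A.zero := by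
    funext n; rcases n with _ | n <;> rfl
  rw [(A.sum_tail _ (A.sumDef_pairSeq h)).2.2, htail,
    (A.sum_tail _ (A.sumDef_pairSeq (A.addDef_zero_right b))).2.2, htail₂, sum_const_zero,
    A.add_zero]
  rfl

theorem map_add_of_hasSum {f : α → ℝ≥0} (h₀ : f A.zero = 0)
    (hf : ∀ s, A.sumDef s → HasSum (fun n => f (s n)) (f (A.sum s))) {a b : α}
    (h : A.addDef a b) : f (A.add a b) = f a + f b := by
  have hpair : HasSum (fun n => f (A.pairSeq a b n)) (∑ n ∈ Finset.range 2, f (A.pairSeq a b n)) :=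
    hasSum_sum_of_ne_finset_zero fun
      | 0, hn | 1, hn => absurd hn (by simp)
      | _ + 2, _ => h₀
  rw [← A.sum_pairSeq h, (hf _ (A.sumDef_pairSeq h)).unique hpair]
  simp [Finset.sum_range_succ, pairSeq]

variable {A}

theorem IsMeasure.add {μ ν : α → ℝ≥0} (hμ : A.IsMeasure μ) (hν : A.IsMeasure ν) :
    A.IsMeasure (μ + ν) := by
  refine ⟨by simp [hμ.1, hν.1], fun a b hab => ?_, fun s hs => (hμ.2.2 s hs).add (hν.2.2 s hs)⟩
  simp only [Pi.add_apply, hμ.2.1 a b hab, hν.2.1 a b hab]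
  ring

theorem isMeasure_zero : A.IsMeasure 0 :=
  ⟨rfl, fun _ _ _ => by simp, fun _ _ => hasSum_zero⟩

theorem IsMeasure.tsub {μ ν : α → ℝ≥0} (hμ : A.IsMeasure μ) (hν : A.IsMeasure ν) (h : ν ≤ μ) :
    A.IsMeasure (μ - ν) := by
  refine ⟨by simp [hμ.1], fun a b hab => ?_, fun s hs => ?_⟩
  · simp only [Pi.sub_apply, hμ.2.1 a b hab, hν.2.1 a b hab, tsub_add_tsub_comm (h a) (h b)]
  · exact NNReal.hasSum_tsub (hμ.2.2 s hs) (hν.2.2 s hs) fun n => h (s n)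

theorem measLe_iff_le {μ ν : α → ℝ≥0} (hμ : A.IsMeasure μ) (hν : A.IsMeasure ν) :
    A.MeasLe μ ν ↔ μ ≤ ν := by
  refine ⟨?_, fun h => ⟨ν - μ, hν.tsub hμ h, add_tsub_cancel_of_le h⟩⟩
  rintro ⟨l, -, rfl⟩
  exact le_add_of_nonneg_right zero_le

theorem measSum_tsum {s : ℕ → α → ℝ≥0} (hs : ∀ n, A.IsMeasure (s n))
    (hsum : ∀ x, Summable fun n => s n x) : A.MeasSum s fun x => ∑' n, s n x := by
  refine ⟨fun x => (hsum x).hasSum, by simp [(hs _).1], fun a b hab => ?_, fun c hc => ?_⟩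
  · simp only [(hs _).2.1 a b hab, (hsum a).tsum_add (hsum b)]
  · rw [← ENNReal.hasSum_coe]
    simp only [ENNReal.coe_tsum (hsum _)]
    convert ENNReal.summable.hasSum using 1
    rw [ENNReal.tsum_comm]
    exact tsum_congr fun n => (ENNReal.tsum_coe_eq ((hs n).2.2 c hc)).symm

variable (A) in
noncomputable def measMeet (μ ν : α → ℝ≥0) (a : α) : ℝ≥0 :=
  sInf {r | ∃ b c, A.addDef b c ∧ A.add b c = a ∧ r = μ b + ν c}

section Meet

variable (μ ν : α → ℝ≥0)

theorem measMeet_le {b c : α} (h : A.addDef b c) : A.measMeet μ ν (A.add b c) ≤ μ b + ν c :=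
  csInf_le (OrderBot.bddBelow _) ⟨b, c, h, rfl, rfl⟩

theorem le_measMeet {a : α} {q : ℝ≥0}
    (h : ∀ b c, A.addDef b c → A.add b c = a → q ≤ μ b + ν c) : q ≤ A.measMeet μ ν a := by
  refine le_csInf ⟨_, a, A.zero, A.addDef_zero_right a, A.add_zero a, rfl⟩ ?_
  rintro _ ⟨b, c, hbc, hbca, rfl⟩
  exact h b c hbc hbca

theorem exists_add_lt_measMeet_add (a : α) {ε : ℝ≥0} (hε : 0 < ε) :
    ∃ b c, A.addDef b c ∧ A.add b c = a ∧ μ b + ν c < A.measMeet μ ν a + ε := by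
  by_contra! h
  exact (lt_add_of_pos_right _ hε).not_ge (le_measMeet μ ν h)

variable {μ ν}

theorem measMeet_le_left (hν : A.IsMeasure ν) : A.measMeet μ ν ≤ μ := fun a => by
  simpa [A.add_zero, hν.1] using measMeet_le μ ν (A.addDef_zero_right a)

theorem measMeet_le_right (hμ : A.IsMeasure μ) : A.measMeet μ ν ≤ ν := fun a => by
  simpa [A.zero_add, hμ.1] using measMeet_le μ ν (A.addDef_zero_left a)

theorem IsMeasure.le_measMeet {σ : α → ℝ≥0} (hσ : A.IsMeasure σ) (hσμ : σ ≤ μ) (hσν : σ ≤ ν) :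
    σ ≤ A.measMeet μ ν := fun _ => by
  refine GCA.le_measMeet μ ν fun b c hbc hbca => ?_
  rw [← hbca, hσ.2.1 b c hbc]
  exact add_le_add (hσμ b) (hσν c)

section Countable

variable (hμ : A.IsMeasure μ) (hν : A.IsMeasure ν) {c : ℕ → α} (hc : A.sumDef c)
include hμ hν hc

theorem summable_measMeet : Summable fun n => A.measMeet μ ν (c n) :=
  NNReal.summable_of_le (fun n => measMeet_le_left hν (c n)) (hμ.2.2 c hc).summable

theorem tsum_measMeet_le : ∑' n, A.measMeet μ ν (c n) ≤ A.measMeet μ ν (A.sum c) := by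
  refine le_measMeet μ ν fun x y hxy hxyc => ?_
  obtain ⟨s, t, hs, ht, rfl, rfl, hst⟩ := A.refinement x y c hxy hc hxyc
  have hμs := hμ.2.2 s hs
  have hνt := hν.2.2 t ht
  calc ∑' n, A.measMeet μ ν (c n) ≤ ∑' n, (μ (s n) + ν (t n)) :=
        (summable_measMeet hμ hν hc).tsum_le_tsum
          (fun n => (hst n).2 ▸ measMeet_le μ ν (hst n).1) (hμs.summable.add hνt.summable)
    _ = μ (A.sum s) + ν (A.sum t) := (hμs.add hνt).tsum_eq

theorem measMeet_sum_le_tsum : A.measMeet μ ν (A.sum c) ≤ ∑' n, A.measMeet μ ν (c n) := by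
  refine le_of_forall_pos_le_add fun ε hε => ?_
  obtain ⟨δ, hδ, D, hδD, hDε⟩ := NNReal.exists_pos_sum_of_countable hε.ne' ℕ
  choose x y hxy hxyc hlt using fun n => exists_add_lt_measMeet_add μ ν (c n) (hδ n)
  obtain ⟨hx, hy, hxy', hxyc'⟩ := funext hxyc ▸ A.sum_add x y hxy (by rwa [funext hxyc])
  have hμx := hμ.2.2 x hx
  have hνy := hν.2.2 y hy
  calc A.measMeet μ ν (A.sum c) ≤ μ (A.sum x) + ν (A.sum y) := hxyc' ▸ measMeet_le μ ν hxy'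
    _ = ∑' n, (μ (x n) + ν (y n)) := (hμx.add hνy).tsum_eq.symm
    _ ≤ ∑' n, (A.measMeet μ ν (c n) + δ n) :=
        (hμx.add hνy).summable.tsum_le_tsum (fun n => (hlt n).le)
          ((summable_measMeet hμ hν hc).add hδD.summable)
    _ = ∑' n, A.measMeet μ ν (c n) + D := by
        rw [(summable_measMeet hμ hν hc).tsum_add hδD.summable, hδD.tsum_eq]
    _ ≤ ∑' n, A.measMeet μ ν (c n) + ε := by gcongr

theorem hasSum_measMeet : HasSum (fun n => A.measMeet μ ν (c n)) (A.measMeet μ ν (A.sum c)) := by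
  rw [← le_antisymm (tsum_measMeet_le hμ hν hc) (measMeet_sum_le_tsum hμ hν hc)]
  exact (summable_measMeet hμ hν hc).hasSum

end Countable

end Meet

theorem isMeasure_measMeet (hμ : A.IsMeasure μ) (hν : A.IsMeasure ν) :
    A.IsMeasure (A.measMeet μ ν) := by
  have h₀ : A.measMeet μ ν A.zero = 0 := le_antisymm ((measMeet_le_left hν _).trans_eq hμ.1) zero_le
  exact ⟨h₀, fun _ _ => A.map_add_of_hasSum h₀ fun _ => hasSum_measMeet hμ hν,
    fun _ => hasSum_measMeet hμ hν⟩

noncomputable def tailSum (c : ℕ → α → ℝ≥0) (n : ℕ) (x : α) : ℝ≥0 :=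
  ∑' k, c (k + n) x

section Tail

variable {c : ℕ → α → ℝ≥0}

theorem tailSum_zero {f : α → ℝ≥0} (hcf : ∀ x, HasSum (fun n => c n x) (f x)) :
    tailSum c 0 = f :=
  funext fun x => (hcf x).tsum_eq

theorem tailSum_eq_add (hc : ∀ x, Summable fun n => c n x) (n : ℕ) :
    tailSum c n = c n + tailSum c (n + 1) := by
  funext x
  have hshift : Summable fun k => c (k + 1 + n) x :=
    (NNReal.summable_nat_add _ (hc x) (n + 1)).congr fun k => by rw [add_right_comm, add_assoc]
  show ∑' k, c (k + n) x = c n x + ∑' k, c (k + (n + 1)) x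
  rw [tsum_eq_zero_add' hshift, Nat.zero_add]
  exact congrArg _ (tsum_congr fun k => by rw [add_right_comm, add_assoc])

theorem tendsto_tailSum (x : α) : Tendsto (fun n => tailSum c n x) atTop (𝓝 0) :=
  NNReal.tendsto_sum_nat_add fun k => c k x

theorem measSum_tailSum (hc : ∀ x, Summable fun n => c n x)
    (hcA : ∀ n, A.IsMeasure (c n)) (n : ℕ) : A.MeasSum (fun k => c (k + n)) (tailSum c n) :=
  measSum_tsum (fun k => hcA (k + n)) fun x => NNReal.summable_nat_add _ (hc x) n

end Tail

theorem exists_measSum_succ {s : ℕ → α → ℝ≥0} {f : α → ℝ≥0} (hs : ∀ n, A.IsMeasure (s n))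
    (hf : A.MeasSum s f) : ∃ g, A.MeasSum (fun n => s (n + 1)) g ∧ f = s 0 + g := by
  have hsum x := (hf.1 x).summable
  exact ⟨tailSum s 1, measSum_tailSum hsum hs 1, by rw [← tailSum_zero hf.1, tailSum_eq_add hsum 0]⟩

theorem exists_measSum_of_measSum_add {s t : ℕ → α → ℝ≥0} {f : α → ℝ≥0}
    (hs : ∀ n, A.IsMeasure (s n)) (ht : ∀ n, A.IsMeasure (t n))
    (hf : A.MeasSum (fun n => s n + t n) f) :
    ∃ g h, A.MeasSum s g ∧ A.MeasSum t h ∧ f = g + h := by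
  have hss x : Summable fun n => s n x :=
    NNReal.summable_of_le (fun _ => le_self_add) (hf.1 x).summable
  have hts x : Summable fun n => t n x :=
    NNReal.summable_of_le (fun _ => le_add_self) (hf.1 x).summable
  exact ⟨_, _, measSum_tsum hs hss, measSum_tsum ht hts,
    funext fun x => (hf.1 x).unique ((hss x).hasSum.add (hts x).hasSum)⟩

theorem IsMeasure.le_measMeet_add {ρ κ τ : α → ℝ≥0} (hρ : A.IsMeasure ρ) (hτ : A.IsMeasure τ)
    (h : ρ ≤ κ + τ) : ρ ≤ A.measMeet ρ κ + τ := fun a => by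
  rw [Pi.add_apply, ← tsub_le_iff_right]
  refine GCA.le_measMeet ρ κ fun b c hbc hbca => ?_
  subst hbca
  rw [tsub_le_iff_right, hρ.2.1 b c hbc, hτ.2.1 b c hbc]
  calc ρ b + ρ c ≤ ρ b + (κ c + τ c) := by gcongr; exact h c
    _ ≤ ρ b + κ c + (τ b + τ c) := by rw [add_assoc]; gcongr; exact le_add_self

variable (A) in
noncomputable def greedyRest (μ : α → ℝ≥0) (c : ℕ → α → ℝ≥0) : ℕ → α → ℝ≥0
  | 0 => μ
  | n + 1 => greedyRest μ c n - A.measMeet (greedyRest μ c n) (c n)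

section Greedy

variable {μ : α → ℝ≥0} {c : ℕ → α → ℝ≥0}

theorem isMeasure_greedyRest (hμ : A.IsMeasure μ) (hc : ∀ n, A.IsMeasure (c n)) (n : ℕ) :
    A.IsMeasure (A.greedyRest μ c n) := by
  induction n with
  | zero => exact hμ
  | succ n ih => exact ih.tsub (isMeasure_measMeet ih (hc n)) (measMeet_le_left (hc n))

theorem sum_measMeet_greedyRest_add (hc : ∀ n, A.IsMeasure (c n)) (n : ℕ) (x : α) :
    ∑ k ∈ Finset.range n, A.measMeet (A.greedyRest μ c k) (c k) x + A.greedyRest μ c n x = μ x := by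
  induction n with
  | zero => simp [greedyRest]
  | succ n ih =>
    rw [Finset.sum_range_succ, add_assoc, greedyRest, Pi.sub_apply,
      add_tsub_cancel_of_le (measMeet_le_left (hc n) x), ih]

theorem greedyRest_le_tailSum (hμ : A.IsMeasure μ) (hc : ∀ n, A.IsMeasure (c n))
    (hsum : ∀ x, Summable fun n => c n x) (hμc : μ ≤ tailSum c 0) (n : ℕ) :
    A.greedyRest μ c n ≤ tailSum c n := by
  induction n with
  | zero => exact hμc
  | succ n ih =>
    have hτ := (measSum_tailSum hsum hc (n + 1)).2
    have hle := (isMeasure_greedyRest hμ hc n).le_measMeet_add hτ (tailSum_eq_add hsum n ▸ ih)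
    exact fun x => tsub_le_iff_left.2 (hle x)

theorem exists_measSum_le_of_le {f : α → ℝ≥0} (hμ : A.IsMeasure μ) (hc : ∀ n, A.IsMeasure (c n))
    (hcf : ∀ x, HasSum (fun n => c n x) (f x)) (hμf : μ ≤ f) :
    ∃ s : ℕ → α → ℝ≥0, (∀ n, A.IsMeasure (s n)) ∧ (∀ n, s n ≤ c n) ∧ A.MeasSum s μ := by
  have hsum x := (hcf x).summable
  have hr := isMeasure_greedyRest hμ hc
  refine ⟨fun n => A.measMeet (A.greedyRest μ c n) (c n), fun n => isMeasure_measMeet (hr n) (hc n),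
    fun n => measMeet_le_right (hr n), fun x => ?_, hμ⟩
  have hr₀ : Tendsto (fun n => A.greedyRest μ c n x) atTop (𝓝 0) :=
    tendsto_of_tendsto_of_tendsto_of_le_of_le tendsto_const_nhds (tendsto_tailSum x)
      (fun _ => zero_le) fun n => greedyRest_le_tailSum hμ hc hsum (tailSum_zero hcf ▸ hμf) n x
  have h := (tendsto_const_nhds (x := μ x)).sub hr₀
  rw [tsub_zero] at h
  exact NNReal.hasSum_iff_tendsto_nat.2
    (h.congr fun n => tsub_eq_of_eq_add (sum_measMeet_greedyRest_add hc n x).symm)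

end Greedy

theorem exists_measSum_refinement {μ ν f : α → ℝ≥0} {c : ℕ → α → ℝ≥0} (hμ : A.IsMeasure μ)
    (hν : A.IsMeasure ν) (hc : ∀ n, A.IsMeasure (c n)) (hcf : A.MeasSum c f) (hf : μ + ν = f) :
    ∃ s t : ℕ → α → ℝ≥0, (∀ n, A.IsMeasure (s n) ∧ A.IsMeasure (t n)) ∧
      A.MeasSum s μ ∧ A.MeasSum t ν ∧ ∀ n, c n = s n + t n := by
  obtain ⟨s, hs, hsc, hsμ⟩ := exists_measSum_le_of_le hμ hc hcf.1 (hf ▸ le_self_add)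
  refine ⟨s, fun n => c n - s n, fun n => ⟨hs n, (hc n).tsub (hs n) (hsc n)⟩, hsμ,
    ⟨fun x => ?_, hν⟩, fun n => (add_tsub_cancel_of_le (hsc n)).symm⟩
  have h : HasSum (fun n => (c n - s n) x) (f x - μ x) :=
    NNReal.hasSum_tsub (hcf.1 x) (hsμ.1 x) fun n => hsc n x
  rwa [← hf, Pi.add_apply, add_tsub_cancel_left] at h

theorem exists_measSum_remainder {s t : ℕ → α → ℝ≥0} (hs : ∀ n, A.IsMeasure (s n))
    (ht : ∀ n, A.IsMeasure (t n)) (hst : ∀ n, s n = t n + s (n + 1)) :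
    ∃ c, A.IsMeasure c ∧ ∀ n, ∃ f, A.MeasSum (fun i => t (i + n)) f ∧ s n = c + f := by
  have hpart m x : ∑ k ∈ Finset.range m, t k x + s m x = s 0 x := by
    induction m with
    | zero => simp
    | succ m ih => rw [Finset.sum_range_succ, add_assoc, ← Pi.add_apply, ← hst, ih]
  have hsum x : Summable fun n => t n x :=
    NNReal.summable_of_sum_range_le fun m => le_self_add.trans_eq (hpart m x)
  have hT₀ : tailSum t 0 ≤ s 0 := fun x =>
    NNReal.tsum_le_of_sum_range_le fun m => le_self_add.trans_eq (hpart m x)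
  have hrem n : s n = (s 0 - tailSum t 0) + tailSum t n := by
    induction n with
    | zero => exact (tsub_add_cancel_of_le hT₀).symm
    | succ n ih =>
      refine add_left_cancel (a := t n) ?_
      rw [← hst, ih, tailSum_eq_add hsum n]
      exact add_left_comm _ _ _
  exact ⟨s 0 - tailSum t 0, (hs 0).tsub (measSum_tailSum hsum ht 0).2 hT₀,
    fun n => ⟨_, measSum_tailSum hsum ht n, hrem n⟩⟩

end GCA

/-- For any GCA `A`, the set `Hom(A, ℝ⁺)` of GCA homomorphisms from `A` to the
nonnegative reals, under pointwise addition, is a cancellative GCA admitting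
binary meets for its induced order: it is closed under pointwise addition,
satisfies Tarski's axioms (in particular refinement and remainder for the
countable sums described by `GCA.MeasSum`), is cancellative, and any two
finite measures have a meet. -/
theorem GCA.hom_nnreal_cancellative_gca_with_meets {α : Type*} (A : GCA α) :
    -- closed under pointwise addition, with identity 0
    (∀ μ ν, A.IsMeasure μ → A.IsMeasure ν → A.IsMeasure (μ + ν)) ∧
    A.IsMeasure (0 : α → ℝ≥0) ∧
    -- axiom 1
    (∀ (s : ℕ → α → ℝ≥0) (f : α → ℝ≥0), (∀ n, A.IsMeasure (s n)) →
      A.MeasSum s f →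
      ∃ g, A.MeasSum (fun n => s (n + 1)) g ∧ f = s 0 + g) ∧
    -- axiom 2
    (∀ (s t : ℕ → α → ℝ≥0) (f : α → ℝ≥0), (∀ n, A.IsMeasure (s n)) →
      (∀ n, A.IsMeasure (t n)) → A.MeasSum (fun n => s n + t n) f →
      ∃ g h, A.MeasSum s g ∧ A.MeasSum t h ∧ f = g + h) ∧
    -- cancellativity
    (∀ μ ν, A.IsMeasure μ → A.IsMeasure ν → μ + ν = μ → ν = 0) ∧
    -- binary meets
    (∀ μ ν, A.IsMeasure μ → A.IsMeasure ν →
      ∃ ρ, A.IsMeasure ρ ∧ A.MeasLe ρ μ ∧ A.MeasLe ρ ν ∧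
        ∀ σ, A.IsMeasure σ → A.MeasLe σ μ → A.MeasLe σ ν → A.MeasLe σ ρ) ∧
    -- refinement
    (∀ (μ ν : α → ℝ≥0) (c : ℕ → α → ℝ≥0) (f : α → ℝ≥0),
      A.IsMeasure μ → A.IsMeasure ν → (∀ n, A.IsMeasure (c n)) →
      A.MeasSum c f → μ + ν = f →
      ∃ s t : ℕ → α → ℝ≥0, (∀ n, A.IsMeasure (s n) ∧ A.IsMeasure (t n)) ∧
        A.MeasSum s μ ∧ A.MeasSum t ν ∧ ∀ n, c n = s n + t n) ∧
    -- remainder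
    (∀ s t : ℕ → α → ℝ≥0, (∀ n, A.IsMeasure (s n)) → (∀ n, A.IsMeasure (t n)) →
      (∀ n, s n = t n + s (n + 1)) →
      ∃ c, A.IsMeasure c ∧ ∀ n, ∃ f, A.MeasSum (fun i => t (i + n)) f ∧
        s n = c + f) := by
  refine ⟨fun _ _ hμ hν => hμ.add hν, GCA.isMeasure_zero, fun _ _ => GCA.exists_measSum_succ,
    fun _ _ _ => GCA.exists_measSum_of_measSum_add, fun _ _ _ _ => add_eq_left.mp,
    fun μ ν hμ hν => ?_, fun _ _ _ _ => GCA.exists_measSum_refinement,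
    fun _ _ => GCA.exists_measSum_remainder⟩
  have hm := GCA.isMeasure_measMeet hμ hν
  refine ⟨A.measMeet μ ν, hm, (GCA.measLe_iff_le hm hμ).2 (GCA.measMeet_le_left hν),
    (GCA.measLe_iff_le hm hν).2 (GCA.measMeet_le_right hμ), fun σ hσ hσμ hσν => ?_⟩
  rw [GCA.measLe_iff_le hσ hμ] at hσμ
  rw [GCA.measLe_iff_le hσ hν] at hσν
  exact (GCA.measLe_iff_le hσ hm).2 (hσ.le_measMeet hσμ hσν)
end
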